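/- arXiv:math/0411591 — 3 statements merged into one kernel-verified Lean document; each statement's English description precedes it below -/
import Mathlib

section
/- Let S₁ = {b ∈ M⁻¹ ∩ M_+ : Δ(b) ≥ 1} and S₃ = {a*a : a ∈ A⁻¹, Δ(a) ≥ 1}. For any tracial subalgebra A of M, S₃ ⊆ S₁; and A is logmodular if and only if the norm closure of S₁ equals the norm closure of S₃. -/
/-!
Common framework: a von Neumann algebra `M` with a faithful normal tracial state `τ`,
together with its noncommutative spaces `L¹(M)` and `L²(M)` (the completions of `M` in the
norms `τ(|x|)` and `τ(|x|²)^{1/2}`), the canonical bimodule actions, the trace functional,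
the absolute value, the Fuglede–Kadison determinant `Δ`, and the weak* topology on `M`
(the topology induced by the pairing with its predual `L¹(M)`).
-/

open scoped ComplexOrder Topology

noncomputable section

section Prelim
variable {M : Type*} [CStarAlgebra M] [PartialOrder M] [StarOrderedRing M]

/-- The absolute value `|x| = (x*x)^{1/2}` in a C*-algebra. -/
def ncAbs (x : M) : M := cfc Real.sqrt (star x * x)

/-- `b` is strictly positive: `b ≥ ε·1` for some scalar `ε > 0`. -/
def StrictPos (b : M) : Prop := ∃ ε : ℝ, 0 < ε ∧ ε • (1 : M) ≤ b

end Prelim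

/-- The data of a finite von Neumann algebra: `M` (a unital C*-algebra which is moreover
a von Neumann algebra, its σ-weak topology being encoded below through the pairing with
`L1`), a faithful tracial state `τ` on `M` (normality being encoded by the fact that `L1`,
the completion of `M` in the norm `τ(|·|)`, is a predual of `M`), the noncommutative
Lebesgue spaces `L1` and `L2` arising as completions of `M`, the multiplication actions
of `M` on them, the extended trace, star, absolute value on `L1`, and the
Fuglede–Kadison determinant `Δ` on `L1` (hence also on `M`). -/
structure NCSetup (M L1 L2 : Type*) [CStarAlgebra M] [PartialOrder M] [StarOrderedRing M]
    [NormedAddCommGroup L1] [NormedSpace ℂ L1]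
    [NormedAddCommGroup L2] [InnerProductSpace ℂ L2] where
  /-- the faithful normal tracial state -/
  τ : M →L[ℂ] ℂ
  τ_one : τ 1 = 1
  τ_pos : ∀ x : M, 0 ≤ x → 0 ≤ τ x
  τ_tracial : ∀ x y : M, τ (x * y) = τ (y * x)
  τ_faithful : ∀ x : M, 0 ≤ x → τ x = 0 → x = 0
  /-- the canonical (dense, isometric onto its range for the `L¹`-norm) embedding of `M`
  into `L¹(M)` -/
  ι1 : M →L[ℂ] L1
  ι1_inj : Function.Injective ι1
  ι1_dense : DenseRange ι1
  ι1_norm : ∀ x : M, ‖ι1 x‖ = (τ (ncAbs x)).re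
  /-- the canonical extension of the trace to `L¹(M)` -/
  tr1 : L1 →L[ℂ] ℂ
  tr1_ι1 : ∀ x : M, tr1 (ι1 x) = τ x
  /-- left multiplication action of `M` on `L¹(M)` -/
  lmul : M → L1 → L1
  lmul_ι1 : ∀ x y : M, lmul x (ι1 y) = ι1 (x * y)
  lmul_cont : ∀ x : M, Continuous (lmul x)
  /-- right multiplication action of `M` on `L¹(M)` -/
  rmul : L1 → M → L1
  rmul_ι1 : ∀ x y : M, rmul (ι1 y) x = ι1 (y * x)
  rmul_cont : ∀ x : M, Continuous (rmul · x)
  /-- the adjoint (star) operation on `L¹(M)` -/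
  star1 : L1 → L1
  star1_ι1 : ∀ x : M, star1 (ι1 x) = ι1 (star x)
  star1_cont : Continuous star1
  /-- the absolute value on `L¹(M)` -/
  abs1 : L1 → L1
  abs1_ι1 : ∀ x : M, abs1 (ι1 x) = ι1 (ncAbs x)
  abs1_cont : Continuous abs1
  /-- the Fuglede–Kadison determinant on `L¹(M)` -/
  Delta : L1 → ℝ
  /-- for `x ∈ M` with `|x|` strictly positive, `Δ(x) = exp τ(log |x|)` -/
  Delta_bounded : ∀ x : M, StrictPos (ncAbs x) →
    Delta (ι1 x) = Real.exp ((τ (cfc Real.log (ncAbs x))).re)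
  /-- in general `Δ(a) = inf_{ε>0} Δ(|a| + ε1)` -/
  Delta_eq_inf : ∀ h : L1,
    Delta h = ⨅ ε : {ε : ℝ // 0 < ε}, Delta (abs1 h + (ε : ℝ) • ι1 1)
  /-- the canonical (dense) embedding of `M` into `L²(M)` -/
  ι2 : M →L[ℂ] L2
  ι2_inj : Function.Injective ι2
  ι2_dense : DenseRange ι2
  inner_ι2 : ∀ x y : M, (inner ℂ (ι2 x) (ι2 y) : ℂ) = τ (star x * y)
  /-- left multiplication action of `M` on `L²(M)` -/
  lmul2 : M → L2 → L2
  lmul2_ι2 : ∀ x y : M, lmul2 x (ι2 y) = ι2 (x * y)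
  lmul2_cont : ∀ x : M, Continuous (lmul2 x)
  /-- right multiplication action of `M` on `L²(M)` -/
  rmul2 : L2 → M → L2
  rmul2_ι2 : ∀ x y : M, rmul2 (ι2 y) x = ι2 (y * x)
  rmul2_cont : ∀ x : M, Continuous (rmul2 · x)

namespace NCSetup

variable {M L1 L2 : Type*} [CStarAlgebra M] [PartialOrder M] [StarOrderedRing M]
    [NormedAddCommGroup L1] [NormedSpace ℂ L1]
    [NormedAddCommGroup L2] [InnerProductSpace ℂ L2]
variable (S : NCSetup M L1 L2)

/-- The Fuglede–Kadison determinant of an element of `M`. -/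
def DeltaM (x : M) : ℝ := S.Delta (S.ι1 x)

/-- The positive part `L¹(M)₊` of `L¹(M)` (the closure of the image of `M₊`). -/
def pos1 : Set L1 := closure (S.ι1 '' {x : M | 0 ≤ x})

/-- The weak* topology `σ(M, L¹(M))` on `M`, induced by the pairing
`⟨h, x⟩ = τ(hx)` of `M` with its predual `L¹(M)`. -/
def wstarTop : TopologicalSpace M :=
  TopologicalSpace.induced (fun (x : M) (h : L1) => S.tr1 (S.rmul h x)) Pi.topologicalSpace

end NCSetup

section Algebras

variable {M L1 L2 : Type*} [CStarAlgebra M] [PartialOrder M] [StarOrderedRing M]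
    [NormedAddCommGroup L1] [NormedSpace ℂ L1]
    [NormedAddCommGroup L2] [InnerProductSpace ℂ L2]

/-- The set `A + A* = {a + b* : a, b ∈ A}`. -/
def selfadjSum (A : Set M) : Set M := {x | ∃ a ∈ A, ∃ b ∈ A, x = a + star b}

/-- The diagonal `D = A ∩ A*`. -/
def Dpart (A : Set M) : Set M := {x | x ∈ A ∧ star x ∈ A}

/-- The invertible elements of `A`, i.e. the `a ∈ A` whose inverse also lies in `A`. -/
def invIn (A : Set M) : Set M := {a | a ∈ A ∧ ∃ b ∈ A, a * b = 1 ∧ b * a = 1}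

variable (S : NCSetup M L1 L2)

/-- A tracial subalgebra of `M`: a weak* closed unital subalgebra `A` of `M` for which the
projection `Φ` of `A` onto `D = A ∩ A*` is a homomorphism on `A` with `τ ∘ Φ = τ`.  Here
(as justified in [BL, Theorem 5.6]) `Φ` is carried as the unique faithful normal
conditional expectation of `M` onto `D` satisfying `τ ∘ Φ = τ`, of which the projection
`A → D` is the restriction, together with its canonical further extension `Φ1` to a
contraction on `L¹(M)`. -/
structure IsTracialSubalgebra (A : Set M) (Φ : M →L[ℂ] M) (Φ1 : L1 →L[ℂ] L1) : Prop where
  one_mem : (1 : M) ∈ A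
  add_mem : ∀ x ∈ A, ∀ y ∈ A, x + y ∈ A
  mul_mem : ∀ x ∈ A, ∀ y ∈ A, x * y ∈ A
  smul_mem : ∀ (c : ℂ), ∀ x ∈ A, c • x ∈ A
  wstar_closed : IsClosed[S.wstarTop] A
  phi_mem : ∀ x : M, Φ x ∈ Dpart A
  phi_id : ∀ d ∈ Dpart A, Φ d = d
  phi_hom : ∀ a ∈ A, ∀ b ∈ A, Φ (a * b) = Φ a * Φ b
  phi_pos : ∀ x : M, 0 ≤ x → 0 ≤ Φ x
  phi_faithful : ∀ x : M, 0 ≤ x → Φ x = 0 → x = 0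
  tau_phi : ∀ x : M, S.τ (Φ x) = S.τ x
  phi_bimod : ∀ d ∈ Dpart A, ∀ x : M, Φ (d * x) = d * Φ x ∧ Φ (x * d) = Φ x * d
  phi_normal : Continuous[S.wstarTop, S.wstarTop] Φ
  phi1_ι1 : ∀ x : M, Φ1 (S.ι1 x) = S.ι1 (Φ x)
  phi1_contraction : ∀ h : L1, ‖Φ1 h‖ ≤ ‖h‖

/-- `A₀ = A ∩ ker Φ`. -/
def Azero (A : Set M) (Φ : M →L[ℂ] M) : Set M := {a | a ∈ A ∧ Φ a = 0}

/-- `A` has factorization: every strictly positive `b ∈ M` is `a*a` for some `a ∈ A⁻¹`. -/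
def HasFactorization (A : Set M) : Prop :=
  ∀ b : M, StrictPos b → ∃ a ∈ invIn A, b = star a * a

/-- `A` is logmodular: every strictly positive `b ∈ M` is a uniform limit of elements
`a*a` with `a ∈ A⁻¹`. -/
def IsLogmodular (A : Set M) : Prop :=
  ∀ b : M, StrictPos b → b ∈ closure {y : M | ∃ a ∈ invIn A, y = star a * a}

/-- `A + A*` is weak* dense in `M`, i.e. `A` is a noncommutative `H^∞` algebra. -/
def WStarDenseSum (A : Set M) : Prop := @Dense M S.wstarTop (selfadjSum A)

/-- Jensen's inequality: `Δ(Φ(a)) ≤ Δ(a)` for all `a ∈ A`. -/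
def JensenInequality (A : Set M) (Φ : M →L[ℂ] M) : Prop :=
  ∀ a ∈ A, S.DeltaM (Φ a) ≤ S.DeltaM a

/-- Jensen's formula: `Δ(Φ(a)) = Δ(a)` for all `a ∈ A⁻¹`. -/
def JensenFormula (A : Set M) (Φ : M →L[ℂ] M) : Prop :=
  ∀ a ∈ invIn A, S.DeltaM (Φ a) = S.DeltaM a

/-- Szegő's theorem: `Δ(h) = inf {τ(h|a+d|²) : a ∈ A₀, d ∈ D⁻¹, Δ(d) ≥ 1}` for every
`h ∈ L¹(M)₊`. -/
def SzegoTheorem (A : Set M) (Φ : M →L[ℂ] M) : Prop :=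
  ∀ h ∈ S.pos1, S.Delta h = sInf {r : ℝ | ∃ a ∈ Azero A Φ, ∃ d ∈ invIn (Dpart A),
    1 ≤ S.DeltaM d ∧ r = (S.tr1 (S.rmul h (star (a + d) * (a + d)))).re}

/-- The unique normal state extension property: if `g ∈ L¹(M)₊` and `τ(fg) = τ(f)` for
all `f ∈ A`, then `g = 1`. -/
def UniqueNormalStateExtension (A : Set M) : Prop :=
  ∀ g ∈ S.pos1, (∀ f ∈ A, S.tr1 (S.lmul f g) = S.τ f) → g = S.ι1 1

/-- `A` is τ-maximal: `A = {x ∈ M : τ(xA₀) = 0}`. -/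
def TauMaximal (A : Set M) (Φ : M →L[ℂ] M) : Prop :=
  A = {x : M | ∀ a ∈ Azero A Φ, S.τ (x * a) = 0}

/-- `L²`-density: `A + A*` is norm-dense in `L²(M)`. -/
def L2Density (A : Set M) : Prop := Dense (S.ι2 '' selfadjSum A)

/-- `A_∞ = [A]₂ ∩ M`, where `[A]₂` is the norm closure of `A` in `L²(M)`. -/
def Ainfty (A : Set M) : Set M := {x : M | S.ι2 x ∈ closure (S.ι2 '' A)}

/-- Partial factorization: every `b ∈ M₊ ∩ M⁻¹` is of the form `b = |a| = |c*|` for some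
`a, c ∈ A ∩ M⁻¹` with `Φ(a)Φ(a⁻¹) = Φ(c)Φ(c⁻¹) = 1`. -/
def PartialFactorization (A : Set M) (Φ : M →L[ℂ] M) : Prop :=
  ∀ b : M, 0 ≤ b → IsUnit b →
    ∃ a c : M, a ∈ A ∧ c ∈ A ∧ IsUnit a ∧ IsUnit c ∧
      b = ncAbs a ∧ b = ncAbs (star c) ∧
      Φ a * Φ (Ring.inverse a) = 1 ∧ Φ c * Φ (Ring.inverse c) = 1

/-- `A` is a maximal tracial subalgebra: there is no properly larger tracial subalgebra
of `M` whose conditional expectation extends that of `A`. -/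
def IsMaximalTracial (A : Set M) (Φ : M →L[ℂ] M) : Prop :=
  ∀ (B : Set M) (Φ' : M →L[ℂ] M) (Φ1' : L1 →L[ℂ] L1),
    IsTracialSubalgebra S B Φ' Φ1' → A ⊆ B → (∀ a ∈ A, Φ' a = Φ a) → B = A

/-- A von Neumann subalgebra of `M`: a weak* closed unital *-subalgebra. -/
def IsVNSubalgebra (N : Set M) : Prop :=
  (1 : M) ∈ N ∧ (∀ x ∈ N, ∀ y ∈ N, x + y ∈ N) ∧ (∀ x ∈ N, ∀ y ∈ N, x * y ∈ N) ∧
    (∀ (c : ℂ), ∀ x ∈ N, c • x ∈ N) ∧ (∀ x ∈ N, star x ∈ N) ∧ IsClosed[S.wstarTop] N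

/-- The von Neumann subalgebra of `M` generated by an element `h` of `L¹(M)` (the smallest
von Neumann subalgebra `N` of `M` with `h ∈ [N]₁`, i.e. such that `h` is affiliated
with `N`). -/
def genVN (h : L1) : Set M :=
  ⋂₀ {N : Set M | IsVNSubalgebra S N ∧ h ∈ closure (S.ι1 '' N)}

/-- The invariant subspace property: every simply right invariant subspace of `L²(M)`
(a closed subspace `N` with `N·A ⊆ N` and with the closure of `N·A₀` properly contained
in `N`) is of the form `u[A]₂` for a unitary `u ∈ M`. -/
def InvariantSubspaceProperty (A : Set M) (Φ : M →L[ℂ] M) : Prop :=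
  ∀ N : Submodule ℂ L2, IsClosed (N : Set L2) →
    (∀ f ∈ N, ∀ a ∈ A, S.rmul2 f a ∈ N) →
    closure {y : L2 | ∃ f ∈ N, ∃ a ∈ Azero A Φ, y = S.rmul2 f a} ⊂ (N : Set L2) →
    ∃ u : M, star u * u = 1 ∧ u * star u = 1 ∧
      (N : Set L2) = S.lmul2 u '' closure (S.ι2 '' A)

/-- Beurling–Nevanlinna factorization: whenever `f ∈ L²(M)` with `f ∉ [fA₀]₂`, then
`f = uh` for a unitary `u ∈ M ∩ [fA]₂` and an `h` with `[hA]₂ = [A]₂`. -/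
def BeurlingNevanlinna (A : Set M) (Φ : M →L[ℂ] M) : Prop :=
  ∀ f : L2, f ∉ closure {y : L2 | ∃ a ∈ Azero A Φ, y = S.rmul2 f a} →
    ∃ u : M, star u * u = 1 ∧ u * star u = 1 ∧
      S.ι2 u ∈ closure {y : L2 | ∃ a ∈ A, y = S.rmul2 f a} ∧
      ∃ h : L2, f = S.lmul2 u h ∧
        closure {y : L2 | ∃ a ∈ A, y = S.rmul2 h a} = closure (S.ι2 '' A)

end Algebras


section Helpers

variable {M : Type*} [CStarAlgebra M] [PartialOrder M] [StarOrderedRing M]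

lemma ncAbs_nonneg (a : M) : 0 ≤ ncAbs a := cfc_nonneg (fun t _ => Real.sqrt_nonneg t)

lemma ncAbs_of_nonneg {b : M} (hb : 0 ≤ b) : ncAbs b = b := by
  have hsa : IsSelfAdjoint b := .of_nonneg hb
  rw [ncAbs, hsa.star_eq, ← sq, ← cfc_comp_pow Real.sqrt 2 b]
  calc cfc (fun t => Real.sqrt (t ^ 2)) b = cfc (id : ℝ → ℝ) b := by
        apply cfc_congr
        intro t ht
        have : (0:ℝ) ≤ t := spectrum_nonneg_of_nonneg hb ht
        simp [Real.sqrt_sq this]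
    _ = b := cfc_id ℝ b

lemma spec_lb {b : M} {δ : ℝ} (hsa : IsSelfAdjoint b) (h : δ • (1:M) ≤ b) :
    ∀ t ∈ spectrum ℝ b, δ ≤ t := by
  rw [← Algebra.algebraMap_eq_smul_one] at h
  exact (algebraMap_le_iff_le_spectrum (a := b) hsa).mp h

lemma spec_ub {b : M} {K : ℝ} (hsa : IsSelfAdjoint b) (h : b ≤ K • (1:M)) :
    ∀ t ∈ spectrum ℝ b, t ≤ K := by
  rw [← Algebra.algebraMap_eq_smul_one] at h
  exact (le_algebraMap_iff_spectrum_le (a := b) hsa).mp h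

namespace StrictPos

lemma nonneg {b : M} (h : StrictPos b) : 0 ≤ b := by
  obtain ⟨ε, hε, h⟩ := h
  exact le_trans (smul_nonneg hε.le zero_le_one) h

lemma isSelfAdjoint {b : M} (h : StrictPos b) : IsSelfAdjoint b := .of_nonneg h.nonneg

lemma spectrum_pos {b : M} (h : StrictPos b) : ∀ t ∈ spectrum ℝ b, 0 < t := by
  obtain ⟨ε, hε, hb⟩ := h
  intro t ht
  exact lt_of_lt_of_le hε (spec_lb (StrictPos.isSelfAdjoint ⟨ε, hε, hb⟩) hb t ht)

lemma isUnit {b : M} (h : StrictPos b) : IsUnit b := by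
  refine spectrum.isUnit_of_zero_notMem (R := ℝ) ?_
  intro h0
  exact absurd (h.spectrum_pos 0 h0) (lt_irrefl 0)

end StrictPos

lemma strictPos_of_isUnit_nonneg [Nontrivial M] {b : M} (hb : 0 ≤ b) (hu : IsUnit b) :
    StrictPos b := by
  have hsa : IsSelfAdjoint b := .of_nonneg hb
  have h : ∀ x ∈ spectrum ℝ b, 0 < x := by
    intro x hx
    rcases (spectrum_nonneg_of_nonneg hb hx).lt_or_eq with h | h
    · exact h
    · exact absurd (h ▸ hx) (spectrum.zero_notMem_iff ℝ |>.mpr hu)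
  obtain ⟨r, hr, hrb⟩ := (CFC.exists_pos_algebraMap_le_iff hsa).mpr h
  exact ⟨r, hr, by rwa [Algebra.algebraMap_eq_smul_one] at hrb⟩

lemma ncAbs_sq (a : M) : ncAbs a ^ 2 = star a * a := by
  rw [ncAbs, ← cfc_pow Real.sqrt 2 (star a * a)]
  calc cfc (fun t => Real.sqrt t ^ 2) (star a * a) = cfc (id : ℝ → ℝ) (star a * a) := by
        apply cfc_congr
        intro t ht
        have : (0:ℝ) ≤ t := spectrum_nonneg_of_nonneg (star_mul_self_nonneg a) ht
        simp [Real.sq_sqrt this]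
    _ = star a * a := cfc_id ℝ (star a * a)

lemma star_smul_mul (r : ℝ) (a : M) :
    star ((r:ℂ) • a) * ((r:ℂ) • a) = (r^2 : ℝ) • (star a * a) := by
  rw [star_smul, smul_mul_smul_comm]
  rw [Complex.star_def, Complex.conj_ofReal, ← Complex.ofReal_mul, ← Complex.coe_smul]
  norm_num [sq]

lemma ncAbs_smul {r : ℝ} (hr : 0 < r) (a : M) : ncAbs ((r:ℂ) • a) = r • ncAbs a := by
  rw [ncAbs, star_smul_mul, ← cfc_comp_smul (r^2) Real.sqrt (star a * a)]
  calc cfc (fun t => Real.sqrt (r^2 • t)) (star a * a)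
      = cfc (fun t => r * Real.sqrt t) (star a * a) := by
        apply cfc_congr; intro t _
        simp only [smul_eq_mul]
        rw [Real.sqrt_mul (sq_nonneg r) t, Real.sqrt_sq hr.le]
    _ = r • cfc Real.sqrt (star a * a) := cfc_const_mul r Real.sqrt (star a * a)

lemma strictPos_star_mul_self [Nontrivial M] {a : M} (ha : IsUnit a) :
    StrictPos (star a * a) :=
  strictPos_of_isUnit_nonneg (star_mul_self_nonneg a) (ha.star.mul ha)

lemma ncAbs_strictPos [Nontrivial M] {a : M} (ha : IsUnit a) : StrictPos (ncAbs a) := by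
  obtain ⟨δ, hδ, hδy⟩ := strictPos_star_mul_self ha
  refine ⟨Real.sqrt δ, Real.sqrt_pos.mpr hδ, ?_⟩
  rw [← Algebra.algebraMap_eq_smul_one, ncAbs]
  exact algebraMap_le_cfc Real.sqrt (Real.sqrt δ) (star a * a)
    (fun t ht => Real.sqrt_le_sqrt ((spec_lb (IsSelfAdjoint.of_nonneg (star_mul_self_nonneg a)) hδy) t ht))

lemma invIn_smul {A : Set M} (hsm : ∀ (c : ℂ), ∀ x ∈ A, c • x ∈ A) {a : M}
    (ha : a ∈ invIn A) {r : ℝ} (hr : r ≠ 0) : (r:ℂ) • a ∈ invIn A := by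
  obtain ⟨haA, binv, hbA, h1, h2⟩ := ha
  refine ⟨hsm _ _ haA, ((r⁻¹ : ℝ):ℂ) • binv, hsm _ _ hbA, ?_, ?_⟩
  · rw [smul_mul_smul_comm, h1, ← Complex.ofReal_mul, mul_inv_cancel₀ hr]; simp
  · rw [smul_mul_smul_comm, h2, ← Complex.ofReal_mul, inv_mul_cancel₀ hr]; simp

lemma isUnit_real_smul {r : ℝ} (hr : r ≠ 0) {a : M} (ha : IsUnit a) :
    IsUnit ((r:ℂ) • a) := by
  rw [Algebra.smul_def]
  exact ((isUnit_iff_ne_zero.mpr (by exact_mod_cast hr)).map (algebraMap ℂ M)).mul ha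

omit [PartialOrder M] [StarOrderedRing M] in
lemma invIn_isUnit {A : Set M} {a : M} (ha : a ∈ invIn A) : IsUnit a := by
  obtain ⟨-, b, -, h1, h2⟩ := ha
  exact ⟨⟨a, b, h1, h2⟩, rfl⟩

end Helpers

namespace NCSetup

variable {M L1 L2 : Type*} [CStarAlgebra M] [PartialOrder M] [StarOrderedRing M]
    [NormedAddCommGroup L1] [NormedSpace ℂ L1]
    [NormedAddCommGroup L2] [InnerProductSpace ℂ L2]
variable (S : NCSetup M L1 L2)

include S in
lemma nontrivialM : Nontrivial M := by
  refine nontrivial_of_ne 1 0 (fun h => ?_)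
  have := S.τ_one
  rw [h, map_zero] at this
  exact one_ne_zero this.symm

lemma tau_re_mono {x y : M} (h : x ≤ y) : (S.τ x).re ≤ (S.τ y).re := by
  have h0 : 0 ≤ S.τ (y - x) := S.τ_pos _ (sub_nonneg.mpr h)
  rw [map_sub] at h0
  have := (Complex.le_def.mp h0).1
  simp only [Complex.zero_re, Complex.sub_re] at this
  linarith

lemma tau_smul_one (r : ℝ) : S.τ (r • (1:M)) = (r : ℂ) := by
  rw [← Complex.coe_smul, map_smul, S.τ_one, smul_eq_mul, mul_one]

/-- `Δ` of a strictly positive element. -/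
lemma deltaM_of_strictPos {b : M} (hb : StrictPos b) :
    S.DeltaM b = Real.exp ((S.τ (cfc Real.log b)).re) := by
  rw [NCSetup.DeltaM, S.Delta_bounded b (by rwa [ncAbs_of_nonneg hb.nonneg]),
    ncAbs_of_nonneg hb.nonneg]

/-- `Δ` of a unit. -/
lemma deltaM_of_isUnit {a : M} (ha : IsUnit a) :
    S.DeltaM a = Real.exp ((S.τ (cfc Real.log (ncAbs a))).re) := by
  have := S.nontrivialM
  exact S.Delta_bounded a (ncAbs_strictPos ha)

lemma deltaM_pos_of_isUnit {a : M} (ha : IsUnit a) : 0 < S.DeltaM a := by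
  rw [S.deltaM_of_isUnit ha]; exact Real.exp_pos _

lemma deltaM_star_mul_self {a : M} (ha : IsUnit a) :
    S.DeltaM (star a * a) = S.DeltaM a ^ 2 := by
  have := S.nontrivialM
  have hm : StrictPos (ncAbs a) := ncAbs_strictPos ha
  have hy : StrictPos (star a * a) := strictPos_star_mul_self ha
  rw [S.deltaM_of_strictPos hy, S.deltaM_of_isUnit ha, ← ncAbs_sq a]
  rw [show cfc Real.log (ncAbs a ^ 2) = CFC.log (ncAbs a ^ 2) from rfl,
    CFC.log_pow 2 (ncAbs a) (fun t ht => (hm.spectrum_pos t ht).ne') hm.isSelfAdjoint]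
  rw [show CFC.log (ncAbs a) = cfc Real.log (ncAbs a) from rfl]
  rw [map_nsmul]
  have : ((2 : ℕ) • S.τ (cfc Real.log (ncAbs a))).re
      = 2 * (S.τ (cfc Real.log (ncAbs a))).re := by
    simp [Complex.smul_re]
  rw [this, two_mul, Real.exp_add, sq]

lemma deltaM_smul {r : ℝ} (hr : 0 < r) {a : M} (ha : IsUnit a) :
    S.DeltaM ((r:ℂ) • a) = r * S.DeltaM a := by
  have := S.nontrivialM
  have hm : StrictPos (ncAbs a) := ncAbs_strictPos ha
  have hu : IsUnit ((r:ℂ) • a) := by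
    have hru : IsUnit ((r:ℂ)) := isUnit_iff_ne_zero.mpr (by exact_mod_cast hr.ne')
    rw [Algebra.smul_def]
    exact (hru.map (algebraMap ℂ M)).mul ha
  rw [S.deltaM_of_isUnit hu, S.deltaM_of_isUnit ha, ncAbs_smul hr]
  rw [show cfc Real.log (r • ncAbs a) = CFC.log (r • ncAbs a) from rfl,
    CFC.log_smul (ncAbs a) (fun t ht => (hm.spectrum_pos t ht).ne') hr.ne' hm.isSelfAdjoint]
  rw [show CFC.log (ncAbs a) = cfc Real.log (ncAbs a) from rfl, map_add,
    Algebra.algebraMap_eq_smul_one, S.tau_smul_one]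
  rw [Complex.add_re, Complex.ofReal_re, Real.exp_add, Real.exp_log hr]

include S in
lemma smul_one_le_smul_one' {s t : ℝ} (h : s ≤ t) : s • (1:M) ≤ t • (1:M) := by
  have h0 : 0 ≤ (t - s) • (1:M) := smul_nonneg (sub_nonneg.mpr h) zero_le_one
  rw [sub_smul] at h0
  exact sub_nonneg.mp h0

lemma tau_log_approx {b : M} {δ : ℝ} (hδ : 0 < δ) (hb : δ • (1:M) ≤ b) {γ : ℝ} (hγ : 0 < γ) :
    ∃ η : ℝ, 0 < η ∧ η ≤ δ/2 ∧ η ≤ 1 ∧ ∀ c : M, 0 ≤ c → ‖c - b‖ < η →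
      (S.τ (cfc Real.log b)).re - γ ≤ (S.τ (cfc Real.log c)).re := by
  have hb0 : 0 ≤ b := StrictPos.nonneg ⟨δ, hδ, hb⟩
  have hbsa : IsSelfAdjoint b := .of_nonneg hb0
  set K := ‖b‖ + 1 with hK
  set δ' := δ/2 with hδ'
  have hδ'0 : 0 < δ' := half_pos hδ
  have hlogcont : ContinuousOn Real.log (Set.Icc δ' K) :=
    Real.continuousOn_log.mono (fun t ht => by
      simp only [Set.mem_compl_iff, Set.mem_singleton_iff]
      exact ne_of_gt (lt_of_lt_of_le hδ'0 ht.1))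
  obtain ⟨p, hp⟩ := exists_polynomial_near_of_continuousOn δ' K Real.log hlogcont (γ/3)
    (by positivity)
  have hF : Continuous (fun c : M => (S.τ (Polynomial.aeval c p)).re) :=
    Complex.continuous_re.comp (S.τ.continuous.comp p.continuous_aeval)
  obtain ⟨η₁, hη₁, hη₁'⟩ := Metric.continuous_iff.mp hF b (γ/3) (by positivity)
  refine ⟨min η₁ (min δ' 1), lt_min hη₁ (lt_min hδ'0 one_pos),
    (min_le_right _ _).trans (min_le_left _ _),
    (min_le_right _ _).trans (min_le_right _ _), ?_⟩
  intro c hc0 hcb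
  have hcsa : IsSelfAdjoint c := .of_nonneg hc0
  have hcb1 : ‖c - b‖ < η₁ := lt_of_lt_of_le hcb (min_le_left _ _)
  have hcbδ : ‖c - b‖ ≤ δ' := le_of_lt (lt_of_lt_of_le hcb ((min_le_right _ _).trans (min_le_left _ _)))
  have hcb2 : ‖c - b‖ ≤ 1 := le_of_lt (lt_of_lt_of_le hcb ((min_le_right _ _).trans (min_le_right _ _)))
  have hsub_sa : IsSelfAdjoint (c - b) := hcsa.sub hbsa
  have h1 : c - b ≤ ‖c - b‖ • 1 := by
    have := IsSelfAdjoint.le_algebraMap_norm_self hsub_sa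
    rwa [Algebra.algebraMap_eq_smul_one] at this
  have h2 : -(‖c - b‖ • (1:M)) ≤ c - b := by
    have := IsSelfAdjoint.neg_algebraMap_norm_le_self hsub_sa
    rwa [Algebra.algebraMap_eq_smul_one] at this
  have hlc : δ' • (1:M) ≤ c := by
    have e1 : δ • (1:M) + -(‖c - b‖ • (1:M)) ≤ b + (c - b) := add_le_add hb h2
    have e2 : δ • (1:M) + -(‖c - b‖ • (1:M)) = (δ - ‖c - b‖) • (1:M) := by
      rw [sub_smul]; abel
    have e3 : δ' • (1:M) ≤ (δ - ‖c - b‖) • (1:M) :=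
      S.smul_one_le_smul_one' (by simp only [hδ'] at hcbδ ⊢; linarith)
    calc δ' • (1:M) ≤ (δ - ‖c - b‖) • (1:M) := e3
      _ ≤ b + (c - b) := e2 ▸ e1
      _ = c := by abel
  have hub : b ≤ ‖b‖ • (1:M) := by
    have := IsSelfAdjoint.le_algebraMap_norm_self hbsa
    rwa [Algebra.algebraMap_eq_smul_one] at this
  have huc : c ≤ K • (1:M) := by
    have e1 : c = b + (c - b) := by abel
    calc c = b + (c - b) := e1
      _ ≤ ‖b‖ • (1:M) + ‖c - b‖ • (1:M) := add_le_add hub h1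
      _ ≤ ‖b‖ • (1:M) + (1:ℝ) • (1:M) := add_le_add le_rfl (S.smul_one_le_smul_one' hcb2)
      _ = K • (1:M) := by rw [← add_smul]
  have hubK : b ≤ K • (1:M) := by
    calc b ≤ ‖b‖ • (1:M) := hub
      _ ≤ K • (1:M) := S.smul_one_le_smul_one' (by rw [hK]; linarith)
  have hlb : δ' • (1:M) ≤ b := le_trans (S.smul_one_le_smul_one' (by rw [hδ']; linarith)) hb
  have hsc : spectrum ℝ c ⊆ Set.Icc δ' K :=
    fun t ht => ⟨spec_lb hcsa hlc t ht, spec_ub hcsa huc t ht⟩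
  have hsb : spectrum ℝ b ⊆ Set.Icc δ' K :=
    fun t ht => ⟨spec_lb hbsa hlb t ht, spec_ub hbsa hubK t ht⟩
  have key : ∀ x : M, IsSelfAdjoint x → spectrum ℝ x ⊆ Set.Icc δ' K →
      (Polynomial.aeval x p - (γ/3) • 1 ≤ cfc Real.log x ∧
        cfc Real.log x ≤ Polynomial.aeval x p + (γ/3) • 1) := by
    intro x hxsa hxs
    have hxlog : ContinuousOn Real.log (spectrum ℝ x) :=
      Real.continuousOn_log.mono (fun t ht => by
        simp only [Set.mem_compl_iff, Set.mem_singleton_iff]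
        exact ne_of_gt (lt_of_lt_of_le hδ'0 (hxs ht).1))
    have hpcont : ContinuousOn (fun t : ℝ => Polynomial.eval t p) (spectrum ℝ x) :=
      p.continuous.continuousOn
    constructor
    · have hmono : cfc (fun t : ℝ => Polynomial.eval t p - γ/3) x ≤ cfc Real.log x := by
        apply cfc_mono (fun t ht => ?_) (by fun_prop) hxlog
        have := hp t (hxs ht)
        have := abs_lt.mp this
        linarith
      calc Polynomial.aeval x p - (γ/3) • 1
          = cfc (fun t : ℝ => Polynomial.eval t p) x - cfc (fun _ : ℝ => γ/3) x := by
            rw [cfc_polynomial p x hxsa, cfc_const (γ/3) x hxsa,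
              Algebra.algebraMap_eq_smul_one]
        _ = cfc (fun t : ℝ => Polynomial.eval t p - γ/3) x := (cfc_sub _ _ x hpcont (by fun_prop)).symm
        _ ≤ cfc Real.log x := hmono
    · have hmono : cfc Real.log x ≤ cfc (fun t : ℝ => Polynomial.eval t p + γ/3) x := by
        apply cfc_mono (fun t ht => ?_) hxlog (by fun_prop)
        have := abs_lt.mp (hp t (hxs ht))
        linarith
      calc cfc Real.log x ≤ cfc (fun t : ℝ => Polynomial.eval t p + γ/3) x := hmono
        _ = Polynomial.aeval x p + (γ/3) • 1 := by
            rw [cfc_add x _ _ hpcont (by fun_prop), cfc_polynomial p x hxsa,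
              cfc_const (γ/3) x hxsa, Algebra.algebraMap_eq_smul_one]
  have e1 : (S.τ (Polynomial.aeval c p)).re - γ/3 ≤ (S.τ (cfc Real.log c)).re := by
    have := S.tau_re_mono (key c hcsa hsc).1
    rw [map_sub, S.tau_smul_one, Complex.sub_re, Complex.ofReal_re] at this
    linarith
  have e3 : (S.τ (cfc Real.log b)).re ≤ (S.τ (Polynomial.aeval b p)).re + γ/3 := by
    have := S.tau_re_mono (key b hbsa hsb).2
    rw [map_add, S.tau_smul_one, Complex.add_re, Complex.ofReal_re] at this
    linarith
  have e2 : |(S.τ (Polynomial.aeval c p)).re - (S.τ (Polynomial.aeval b p)).re| < γ/3 := by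
    have := hη₁' c (by rwa [dist_eq_norm])
    rwa [Real.dist_eq] at this
  have := abs_lt.mp e2
  linarith

end NCSetup

/-- Proposition 3.5 (b): with `S₁ = {b ∈ M⁻¹ ∩ M₊ : Δ(b) ≥ 1}` and
`S₃ = {a*a : a ∈ A⁻¹, Δ(a) ≥ 1}`, one has `S₃ ⊆ S₁`; and `A` is logmodular if and
only if the norm closures of `S₁` and `S₃` coincide. -/
theorem S3_subset_S1_and_isLogmodular_iff_closures_eq {M L1 L2 : Type*} [CStarAlgebra M] [PartialOrder M] [StarOrderedRing M]
    [NormedAddCommGroup L1] [NormedSpace ℂ L1]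
    [NormedAddCommGroup L2] [InnerProductSpace ℂ L2]
    (S : NCSetup M L1 L2)
    (A : Set M) (Φ : M →L[ℂ] M) (Φ1 : L1 →L[ℂ] L1)
    (hA : IsTracialSubalgebra S A Φ Φ1) :
    {x : M | ∃ a ∈ invIn A, 1 ≤ S.DeltaM a ∧ x = star a * a} ⊆
      {b : M | IsUnit b ∧ 0 ≤ b ∧ 1 ≤ S.DeltaM b} ∧
    (IsLogmodular A ↔
      closure {b : M | IsUnit b ∧ 0 ≤ b ∧ 1 ≤ S.DeltaM b} =
        closure {x : M | ∃ a ∈ invIn A, 1 ≤ S.DeltaM a ∧ x = star a * a}) := by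
  have ntM := S.nontrivialM
  have hsub : {x : M | ∃ a ∈ invIn A, 1 ≤ S.DeltaM a ∧ x = star a * a} ⊆
      {b : M | IsUnit b ∧ 0 ≤ b ∧ 1 ≤ S.DeltaM b} := by
    rintro x ⟨a, haA, hΔa, rfl⟩
    have hu : IsUnit a := invIn_isUnit haA
    refine ⟨hu.star.mul hu, star_mul_self_nonneg a, ?_⟩
    rw [S.deltaM_star_mul_self hu]
    nlinarith [S.deltaM_pos_of_isUnit hu]
  refine ⟨hsub, ?_, ?_⟩
  · -- logmodular → closures equal
    intro hlog
    refine Set.Subset.antisymm ?_ (closure_mono hsub)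
    refine closure_minimal ?_ isClosed_closure
    rintro b ⟨hu, hb0, hΔb⟩
    have hsp : StrictPos b := strictPos_of_isUnit_nonneg hb0 hu
    obtain ⟨δ, hδ, hδb⟩ := hsp
    have hsp : StrictPos b := ⟨δ, hδ, hδb⟩
    rw [Metric.mem_closure_iff]
    intro ε hε
    set K := ‖b‖ + 1 with hK
    have hK0 : 0 < K := by positivity
    set m := min 1 (ε/(4*K)) with hm
    have hm0 : 0 < m := lt_min one_pos (by positivity)
    set γ := Real.log (1 + m) with hγdef
    have hγ : 0 < γ := Real.log_pos (by linarith)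
    have hexpγ : Real.exp γ = 1 + m := Real.exp_log (by linarith)
    obtain ⟨η, hη0, hηδ, hη1, hηP⟩ := S.tau_log_approx hδ hδb hγ
    set η' := min η (ε/4) with hη'def
    have hη'0 : 0 < η' := lt_min hη0 (by positivity)
    obtain ⟨c, hcT, hbc⟩ := Metric.mem_closure_iff.mp (hlog b hsp) η' hη'0
    obtain ⟨a, haA, hca⟩ := hcT
    have hua : IsUnit a := invIn_isUnit haA
    have hτb : 0 ≤ (S.τ (cfc Real.log b)).re := by
      have h := hΔb
      rw [S.deltaM_of_strictPos hsp] at h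
      exact Real.one_le_exp_iff.mp h
    have hbcn : ‖c - b‖ < η := by
      rw [dist_eq_norm, norm_sub_rev] at hbc
      exact lt_of_lt_of_le hbc (min_le_left _ _)
    have hbcn' : ‖c - b‖ < ε/4 := by
      rw [dist_eq_norm, norm_sub_rev] at hbc
      exact lt_of_lt_of_le hbc (min_le_right _ _)
    have hc0 : 0 ≤ c := hca ▸ star_mul_self_nonneg a
    have hτc := hηP c hc0 hbcn
    have hΔc : S.DeltaM c = S.DeltaM a ^ 2 := by
      rw [hca]; exact S.deltaM_star_mul_self hua
    have hΔcv : S.DeltaM c = Real.exp ((S.τ (cfc Real.log c)).re) :=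
      S.deltaM_of_strictPos (by rw [hca]; exact strictPos_star_mul_self hua)
    have hΔa_lb : Real.exp (-(γ/2)) ≤ S.DeltaM a := by
      have h1 : Real.exp (-γ) ≤ S.DeltaM a ^ 2 := by
        rw [← hΔc, hΔcv]
        exact Real.exp_le_exp.mpr (by linarith)
      have hsq : Real.exp (-(γ/2)) * Real.exp (-(γ/2)) = Real.exp (-γ) := by
        rw [← Real.exp_add]; ring_nf
      nlinarith [S.deltaM_pos_of_isUnit hua, Real.exp_pos (-(γ/2))]
    set ρ := Real.exp (γ/2) with hρdef
    have hρpos : 0 < ρ := Real.exp_pos _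
    have hρ1 : 1 ≤ ρ := Real.one_le_exp (by positivity)
    have hρsq : ρ^2 = 1 + m := by
      have h2 : γ/2 + γ/2 = γ := by ring
      rw [hρdef, sq, ← Real.exp_add, h2, hexpγ]
    refine ⟨star ((ρ:ℂ) • a) * ((ρ:ℂ) • a),
      ⟨(ρ:ℂ) • a, invIn_smul hA.smul_mem haA hρpos.ne', ?_, rfl⟩, ?_⟩
    · rw [S.deltaM_smul hρpos hua]
      calc (1:ℝ) = Real.exp (γ/2) * Real.exp (-(γ/2)) := by
            rw [← Real.exp_add]; norm_num
        _ ≤ ρ * S.DeltaM a := mul_le_mul_of_nonneg_left hΔa_lb hρpos.le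
    · rw [star_smul_mul, ← hca, dist_eq_norm]
      have hre : b - (ρ^2 : ℝ) • c = (b - c) - ((ρ^2 - 1) : ℝ) • c := by
        rw [sub_smul, one_smul]; abel
      have hcnorm : ‖c‖ ≤ K := by
        calc ‖c‖ = ‖b + (c - b)‖ := by congr 1; abel
          _ ≤ ‖b‖ + ‖c - b‖ := norm_add_le _ _
          _ ≤ ‖b‖ + 1 := by linarith [hbcn.le.trans hη1]
      have hmK : m ≤ ε/(4*K) := min_le_right _ _
      have hbound : ‖b - (ρ^2 : ℝ) • c‖ ≤ ‖b - c‖ + m * ‖c‖ := by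
        rw [hre]
        refine (norm_sub_le _ _).trans ?_
        rw [norm_smul, Real.norm_eq_abs, abs_of_nonneg (by nlinarith : (0:ℝ) ≤ ρ^2 - 1)]
        have : ρ^2 - 1 = m := by linarith
        rw [this]
      have hmc : m * ‖c‖ ≤ ε/4 := by
        calc m * ‖c‖ ≤ (ε/(4*K)) * K := by
              apply mul_le_mul hmK hcnorm (norm_nonneg c) (by positivity)
          _ = ε/4 := by field_simp
      calc ‖b - (ρ^2 : ℝ) • c‖ ≤ ‖b - c‖ + m * ‖c‖ := hbound
        _ < ε/4 + ε/4 := by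
            have : ‖b - c‖ < ε/4 := by rwa [norm_sub_rev]
            linarith
        _ ≤ ε := by linarith
  · -- closures equal → logmodular
    intro hcl
    intro b hb
    have hu : IsUnit b := hb.isUnit
    have hΔb : 0 < S.DeltaM b := S.deltaM_pos_of_isUnit hu
    set t := max 1 (S.DeltaM b)⁻¹ with htdef
    have ht0 : 0 < t := lt_of_lt_of_le one_pos (le_max_left _ _)
    have htb : 1 ≤ t * S.DeltaM b := by
      calc (1:ℝ) = (S.DeltaM b)⁻¹ * S.DeltaM b := (inv_mul_cancel₀ hΔb.ne').symm
        _ ≤ t * S.DeltaM b := mul_le_mul_of_nonneg_right (le_max_right _ _) hΔb.le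
    have hb' : (t:ℂ) • b ∈ {b : M | IsUnit b ∧ 0 ≤ b ∧ 1 ≤ S.DeltaM b} := by
      refine ⟨isUnit_real_smul ht0.ne' hu, ?_, ?_⟩
      · rw [Complex.coe_smul]
        exact smul_nonneg ht0.le hb.nonneg
      · rw [S.deltaM_smul ht0 hu]; exact htb
    have hmem : (t:ℂ) • b ∈
        closure {y : M | ∃ a ∈ invIn A, y = star a * a} := by
      have h1 : (t:ℂ) • b ∈
          closure {x : M | ∃ a ∈ invIn A, 1 ≤ S.DeltaM a ∧ x = star a * a} := by
        rw [← hcl]; exact subset_closure hb'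
      exact closure_mono (fun y hy => by
        obtain ⟨a, ha, _, hy⟩ := hy; exact ⟨a, ha, hy⟩) h1
    have hbeq : b = ((t⁻¹ : ℝ):ℂ) • ((t:ℂ) • b) := by
      rw [smul_smul, ← Complex.ofReal_mul, inv_mul_cancel₀ ht0.ne']
      simp
    have himg : (fun y : M => ((t⁻¹ : ℝ):ℂ) • y) ''
        {y : M | ∃ a ∈ invIn A, y = star a * a} ⊆
        {y : M | ∃ a ∈ invIn A, y = star a * a} := by
      rintro y ⟨z, ⟨a, haA, rfl⟩, rfl⟩
      have hs0 : (0:ℝ) < Real.sqrt t⁻¹ := Real.sqrt_pos.mpr (inv_pos.mpr ht0)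
      refine ⟨((Real.sqrt t⁻¹ : ℝ):ℂ) • a, invIn_smul hA.smul_mem haA hs0.ne', ?_⟩
      show ((t⁻¹ : ℝ):ℂ) • (star a * a) =
        star (((Real.sqrt t⁻¹ : ℝ):ℂ) • a) * (((Real.sqrt t⁻¹ : ℝ):ℂ) • a)
      rw [star_smul_mul, Real.sq_sqrt (inv_pos.mpr ht0).le, Complex.coe_smul]
    have hbmem : b ∈ (fun y : M => ((t⁻¹ : ℝ):ℂ) • y) ''
        closure {y : M | ∃ a ∈ invIn A, y = star a * a} :=
      ⟨(t:ℂ) • b, hmem, hbeq.symm⟩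
    exact closure_mono himg
      (image_closure_subset_closure_image (continuous_const_smul _) hbmem)
end
end

section
/- Let A be a tracial subalgebra of M with conditional expectation Φ, and suppose A satisfies L²-density. Then {x ∈ M : τ(xa) = 0 for all a ∈ A₀} is the unique largest tracial subalgebra of M containing A whose conditional expectation is Φ. In particular, if A is maximal and satisfies L²-density, then A is τ-maximal. -/
/-!
Common framework: a von Neumann algebra `M` with a faithful normal tracial state `τ`,
together with its noncommutative spaces `L¹(M)` and `L²(M)` (the completions of `M` in the
norms `τ(|x|)` and `τ(|x|²)^{1/2}`), the canonical bimodule actions, the trace functional,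
the absolute value, the Fuglede–Kadison determinant `Δ`, and the weak* topology on `M`
(the topology induced by the pairing with its predual `L¹(M)`).
-/

open scoped ComplexOrder Topology

noncomputable section

/- ======== auxiliary lemmas ======== -/
section Aux51
variable {M L1 L2 : Type*} [CStarAlgebra M] [PartialOrder M] [StarOrderedRing M]
    [NormedAddCommGroup L1] [NormedSpace ℂ L1]
    [NormedAddCommGroup L2] [InnerProductSpace ℂ L2]
    (S : NCSetup M L1 L2) {A : Set M} {Φ : M →L[ℂ] M} {Φ1 : L1 →L[ℂ] L1}

set_option linter.unusedSectionVars false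
namespace NC51

/-- Pythagoras -/
lemma norm_le_of_inner_eq_zero {E : Type*} [NormedAddCommGroup E] [InnerProductSpace ℂ E]
    {u v : E} (h : (inner ℂ u v : ℂ) = 0) : ‖u‖ ≤ ‖u - v‖ := by
  have h2 : ‖u - v‖ ^ 2 = ‖u‖ ^ 2 + ‖v‖ ^ 2 := by
    rw [@norm_sub_sq ℂ, h]; simp
  nlinarith [norm_nonneg u, norm_nonneg (u - v), sq_nonneg (‖v‖)]

lemma tau_conj (x y : M) :
    (starRingEnd ℂ) (S.τ (star x * y)) = S.τ (star y * x) := by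
  have Q : ∀ z : M, (starRingEnd ℂ) (S.τ (star z * z)) = S.τ (star z * z) := by
    intro z
    rw [Complex.conj_eq_iff_im]
    exact (Complex.nonneg_iff.mp (S.τ_pos _ (star_mul_self_nonneg z))).2.symm
  have e1 : S.τ (star (x + y) * (x + y))
      = S.τ (star x * x) + S.τ (star x * y) + S.τ (star y * x) + S.τ (star y * y) := by
    simp only [star_add, add_mul, mul_add, map_add]; ring
  have e2 : S.τ (star (x + Complex.I • y) * (x + Complex.I • y))
      = S.τ (star x * x) + Complex.I * S.τ (star x * y)
        - Complex.I * S.τ (star y * x) + S.τ (star y * y) := by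
    simp only [star_add, star_smul, add_mul, mul_add, map_add, smul_mul_assoc,
      mul_smul_comm, map_smul, smul_smul, Complex.star_def, Complex.conj_I, smul_eq_mul,
      neg_smul, neg_mul, map_neg, mul_neg]
    ring_nf
    rw [Complex.I_sq]
    ring
  have h1 := Q (x + y)
  have h2 := Q (x + Complex.I • y)
  rw [e1] at h1
  rw [e2] at h2
  simp only [map_add, map_sub, map_mul, Complex.conj_I] at h1 h2
  rw [Q x, Q y] at h1 h2
  set a := S.τ (star x * y)
  set b := S.τ (star y * x)
  have hs : (starRingEnd ℂ) a + (starRingEnd ℂ) b = a + b := by linear_combination h1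
  have hdiff : -(Complex.I * (starRingEnd ℂ) a) + Complex.I * (starRingEnd ℂ) b
      = Complex.I * a - Complex.I * b := by linear_combination h2
  linear_combination (1/2 : ℂ) * hs + (Complex.I/2) * hdiff
    + (((starRingEnd ℂ) a + a - b - (starRingEnd ℂ) b)/2) * Complex.I_sq

lemma tau_star (x : M) : S.τ (star x) = (starRingEnd ℂ) (S.τ x) := by
  have h := tau_conj S x 1
  simp only [mul_one, star_one, one_mul] at h
  rw [← h, Complex.conj_conj]

lemma zero_of_tau_mul (z : M) (h : ∀ m : M, S.τ (z * m) = 0) : z = 0 := by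
  have h0 := h (star z)
  have hz : z * star z = 0 := S.τ_faithful _ (mul_star_self_nonneg z) h0
  exact (CStarRing.mul_star_self_eq_zero_iff z).mp hz

variable (hA : IsTracialSubalgebra S A Φ Φ1)
include hA

lemma memD_star {d : M} (hd : d ∈ Dpart A) : star d ∈ Dpart A :=
  ⟨hd.2, by simpa [star_star] using hd.1⟩

lemma sub_mem_A {x y : M} (hx : x ∈ A) (hy : y ∈ A) : x - y ∈ A := by
  have := hA.add_mem x hx _ (hA.smul_mem (-1) y hy)
  simpa [neg_one_smul, sub_eq_add_neg] using this

lemma azero_mk {a : M} (ha : a ∈ A) : a - Φ a ∈ Azero A Φ := by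
  refine ⟨sub_mem_A S hA ha (hA.phi_mem a).1, ?_⟩
  rw [map_sub, hA.phi_id _ (hA.phi_mem a), sub_self]

lemma tau_azero {a : M} (ha : a ∈ Azero A Φ) : S.τ a = 0 := by
  rw [← hA.tau_phi, ha.2, map_zero]

lemma mul_azero {b a : M} (hb : b ∈ A) (ha : a ∈ Azero A Φ) : b * a ∈ Azero A Φ :=
  ⟨hA.mul_mem _ hb _ ha.1, by rw [hA.phi_hom _ hb _ ha.1, ha.2, mul_zero]⟩

lemma azero_mul {a b : M} (ha : a ∈ Azero A Φ) (hb : b ∈ A) : a * b ∈ Azero A Φ :=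
  ⟨hA.mul_mem _ ha.1 _ hb, by rw [hA.phi_hom _ ha.1 _ hb, ha.2, zero_mul]⟩

lemma A_subset_Amax : A ⊆ {x : M | ∀ a ∈ Azero A Φ, S.τ (x * a) = 0} := by
  intro x hx a ha
  exact tau_azero S hA (mul_azero S hA hx ha)

/-- τ(star d * z) = 0 when d ∈ D and Φ z = 0 -/
lemma tau_d_mul_zero {d z : M} (hd : d ∈ Dpart A) (hz : Φ z = 0) :
    S.τ (star d * z) = 0 := by
  rw [← hA.tau_phi, (hA.phi_bimod (star d) (memD_star S hA hd) z).1, hz, mul_zero, map_zero]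

/-- orthogonality O1: inner (ι2 x) (ι2 (star b)) = 0 for x ∈ Amax, b ∈ A₀ -/
lemma inner_amax_starAzero {x b : M} (hx : x ∈ {x : M | ∀ a ∈ Azero A Φ, S.τ (x * a) = 0})
    (hb : b ∈ Azero A Φ) : (inner ℂ (S.ι2 x) (S.ι2 (star b)) : ℂ) = 0 := by
  rw [S.inner_ι2]
  have : star x * star b = star (b * x) := by rw [star_mul]
  rw [this, tau_star S, S.τ_tracial, hx b hb, map_zero]

/-- generic: inner against closure of image vanishes -/
lemma inner_zero_of_mem_closure {w : L2} {s : Set M} (c : M)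
    (hw : w ∈ closure (S.ι2 '' s)) (h0 : ∀ a ∈ s, S.τ (c * a) = 0) :
    (inner ℂ (S.ι2 (star c)) w : ℂ) = 0 := by
  have hsub : closure (S.ι2 '' s) ⊆ {v : L2 | (inner ℂ (S.ι2 (star c)) v : ℂ) = 0} := by
    refine closure_minimal ?_ (isClosed_eq (continuous_const.inner continuous_id) continuous_const)
    rintro _ ⟨a, ha, rfl⟩
    show (inner ℂ (S.ι2 (star c)) (S.ι2 a) : ℂ) = 0
    rw [S.inner_ι2, star_star]
    exact h0 a ha
  exact hsub hw


lemma tau_mul_d_zero {d z : M} (hd : d ∈ Dpart A) (hz : Φ z = 0) :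
    S.τ (star z * d) = 0 := by
  rw [← tau_conj S d z, tau_d_mul_zero S hA hd hz, map_zero]

lemma mem_closure_A (hdens : L2Density S A) {x : M}
    (hx : ∀ a ∈ Azero A Φ, S.τ (x * a) = 0) :
    S.ι2 x ∈ closure (S.ι2 '' A) := by
  rw [Metric.mem_closure_iff]
  intro ε hε
  obtain ⟨w, hw, hwd⟩ := Metric.mem_closure_iff.mp (hdens (S.ι2 x)) ε hε
  obtain ⟨z, hz, rfl⟩ := hw
  obtain ⟨a, ha, b, hb, rfl⟩ := hz
  have ha' : a + star (Φ b) ∈ A := hA.add_mem _ ha _ (hA.phi_mem b).2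
  have hb' : b - Φ b ∈ Azero A Φ := azero_mk S hA hb
  have hkey : (a + star b : M) = (a + star (Φ b)) + star (b - Φ b) := by
    rw [star_sub]; abel
  have orth : (inner ℂ (S.ι2 x - S.ι2 (a + star (Φ b))) (S.ι2 (star (b - Φ b))) : ℂ) = 0 := by
    rw [inner_sub_left, inner_amax_starAzero S hA hx hb',
      inner_amax_starAzero S hA (A_subset_Amax S hA ha') hb', sub_zero]
  refine ⟨S.ι2 (a + star (Φ b)), Set.mem_image_of_mem _ ha', ?_⟩
  have h3 : (S.ι2 x - S.ι2 (a + star (Φ b))) - S.ι2 (star (b - Φ b))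
      = S.ι2 x - S.ι2 (a + star b) := by
    rw [sub_sub, ← map_add, ← hkey]
  calc dist (S.ι2 x) (S.ι2 (a + star (Φ b))) = ‖S.ι2 x - S.ι2 (a + star (Φ b))‖ :=
        dist_eq_norm _ _
    _ ≤ ‖(S.ι2 x - S.ι2 (a + star (Φ b))) - S.ι2 (star (b - Φ b))‖ :=
        norm_le_of_inner_eq_zero orth
    _ = ‖S.ι2 x - S.ι2 (a + star b)‖ := by rw [h3]
    _ = dist (S.ι2 x) (S.ι2 (a + star b)) := (dist_eq_norm _ _).symm
    _ < ε := hwd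

lemma mem_closure_Azero (hdens : L2Density S A) {y : M}
    (hy : ∀ a ∈ Azero A Φ, S.τ (y * a) = 0) (hy0 : Φ y = 0) :
    S.ι2 y ∈ closure (S.ι2 '' Azero A Φ) := by
  rw [Metric.mem_closure_iff]
  intro ε hε
  obtain ⟨w, hw, hwd⟩ :=
    Metric.mem_closure_iff.mp (mem_closure_A S hA hdens hy) ε hε
  obtain ⟨a, ha, rfl⟩ := hw
  have ha0 : a - Φ a ∈ Azero A Φ := azero_mk S hA ha
  have orth : (inner ℂ (S.ι2 y - S.ι2 (a - Φ a)) (S.ι2 (Φ a)) : ℂ) = 0 := by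
    rw [inner_sub_left]
    have t1 : (inner ℂ (S.ι2 y) (S.ι2 (Φ a)) : ℂ) = 0 := by
      rw [S.inner_ι2]; exact tau_mul_d_zero S hA (hA.phi_mem a) hy0
    have t2 : (inner ℂ (S.ι2 (a - Φ a)) (S.ι2 (Φ a)) : ℂ) = 0 := by
      rw [S.inner_ι2]; exact tau_mul_d_zero S hA (hA.phi_mem a) ha0.2
    rw [t1, t2, sub_zero]
  refine ⟨S.ι2 (a - Φ a), Set.mem_image_of_mem _ ha0, ?_⟩
  have h3 : (S.ι2 y - S.ι2 (a - Φ a)) - S.ι2 (Φ a) = S.ι2 y - S.ι2 a := by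
    rw [sub_sub, ← map_add, sub_add_cancel]
  calc dist (S.ι2 y) (S.ι2 (a - Φ a)) = ‖S.ι2 y - S.ι2 (a - Φ a)‖ := dist_eq_norm _ _
    _ ≤ ‖(S.ι2 y - S.ι2 (a - Φ a)) - S.ι2 (Φ a)‖ := norm_le_of_inner_eq_zero orth
    _ = ‖S.ι2 y - S.ι2 a‖ := by rw [h3]
    _ = dist (S.ι2 y) (S.ι2 a) := (dist_eq_norm _ _).symm
    _ < ε := hwd

lemma eq_phi_of_mem_closure_D {x : M} (hx : S.ι2 x ∈ closure (S.ι2 '' Dpart A)) :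
    x = Φ x := by
  have key : ∀ m : M, S.τ (m * x) = S.τ (Φ m * x) := by
    intro m
    have hsub : closure (S.ι2 '' Dpart A) ⊆
        {v : L2 | (inner ℂ (S.ι2 (star m)) v : ℂ) = (inner ℂ (S.ι2 (star (Φ m))) v : ℂ)} := by
      refine closure_minimal ?_ (isClosed_eq (continuous_const.inner continuous_id)
        (continuous_const.inner continuous_id))
      rintro _ ⟨d, hdD, rfl⟩
      show (inner ℂ (S.ι2 (star m)) (S.ι2 d) : ℂ) = (inner ℂ (S.ι2 (star (Φ m))) (S.ι2 d) : ℂ)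
      rw [S.inner_ι2, S.inner_ι2, star_star, star_star,
        ← hA.tau_phi (m * d), (hA.phi_bimod d hdD m).2, ← hA.tau_phi (Φ m * d),
        (hA.phi_bimod d hdD (Φ m)).2, hA.phi_id _ (hA.phi_mem m)]
    have h := hsub hx
    simp only [Set.mem_setOf_eq] at h
    rwa [S.inner_ι2, S.inner_ι2, star_star, star_star] at h
  have key2 : ∀ m : M, S.τ (m * x) = S.τ (m * Φ x) := by
    intro m
    calc S.τ (m * x) = S.τ (Φ m * x) := key m
      _ = S.τ (Φ (Φ m * x)) := (hA.tau_phi _).symm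
      _ = S.τ (Φ m * Φ x) := by rw [(hA.phi_bimod (Φ m) (hA.phi_mem m) x).1]
      _ = S.τ (Φ (m * Φ x)) := by rw [(hA.phi_bimod (Φ x) (hA.phi_mem x) m).2]
      _ = S.τ (m * Φ x) := hA.tau_phi _
  have hz : x - Φ x = 0 := by
    apply zero_of_tau_mul S
    intro m
    rw [S.τ_tracial, mul_sub, map_sub, key2 m, sub_self]
  exact sub_eq_zero.mp hz

lemma mem_D_of_amax (hdens : L2Density S A) {x : M}
    (hx : ∀ a ∈ Azero A Φ, S.τ (x * a) = 0)
    (hx' : ∀ a ∈ Azero A Φ, S.τ (star x * a) = 0) :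
    x ∈ Dpart A := by
  have hclD : S.ι2 x ∈ closure (S.ι2 '' Dpart A) := by
    rw [Metric.mem_closure_iff]
    intro ε hε
    obtain ⟨w, hw, hwd⟩ :=
      Metric.mem_closure_iff.mp (mem_closure_A S hA hdens hx) ε hε
    obtain ⟨a, ha, rfl⟩ := hw
    have ha0 : a - Φ a ∈ Azero A Φ := azero_mk S hA ha
    have orth : (inner ℂ (S.ι2 x - S.ι2 (Φ a)) (S.ι2 (a - Φ a)) : ℂ) = 0 := by
      rw [inner_sub_left]
      have t1 : (inner ℂ (S.ι2 x) (S.ι2 (a - Φ a)) : ℂ) = 0 := by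
        rw [S.inner_ι2]; exact hx' _ ha0
      have t2 : (inner ℂ (S.ι2 (Φ a)) (S.ι2 (a - Φ a)) : ℂ) = 0 := by
        rw [S.inner_ι2]; exact tau_d_mul_zero S hA (hA.phi_mem a) ha0.2
      rw [t1, t2, sub_zero]
    refine ⟨S.ι2 (Φ a), Set.mem_image_of_mem _ (hA.phi_mem a), ?_⟩
    have h3 : (S.ι2 x - S.ι2 (Φ a)) - S.ι2 (a - Φ a) = S.ι2 x - S.ι2 a := by
      rw [map_sub, sub_sub_sub_cancel_right]
    calc dist (S.ι2 x) (S.ι2 (Φ a)) = ‖S.ι2 x - S.ι2 (Φ a)‖ := dist_eq_norm _ _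
      _ ≤ ‖(S.ι2 x - S.ι2 (Φ a)) - S.ι2 (a - Φ a)‖ := norm_le_of_inner_eq_zero orth
      _ = ‖S.ι2 x - S.ι2 a‖ := by rw [h3]
      _ = dist (S.ι2 x) (S.ι2 a) := (dist_eq_norm _ _).symm
      _ < ε := hwd
  have hxphi := eq_phi_of_mem_closure_D S hA hclD
  rw [hxphi]
  exact hA.phi_mem x

lemma mul_mem_amax (hdens : L2Density S A) {x y : M}
    (hx : ∀ a ∈ Azero A Φ, S.τ (x * a) = 0)
    (hy : ∀ a ∈ Azero A Φ, S.τ (y * a) = 0) :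
    ∀ a ∈ Azero A Φ, S.τ (x * y * a) = 0 := by
  intro a ha
  have hy' : S.ι2 (y * a) ∈ closure (S.ι2 '' ((fun b => b * a) '' A)) := by
    have hcl : S.rmul2 (S.ι2 y) a ∈ closure ((fun v => S.rmul2 v a) '' (S.ι2 '' A)) := by
      apply image_closure_subset_closure_image (S.rmul2_cont a)
      exact Set.mem_image_of_mem _ (mem_closure_A S hA hdens hy)
    rw [S.rmul2_ι2] at hcl
    have him : (fun v => S.rmul2 v a) '' (S.ι2 '' A) = S.ι2 '' ((fun b => b * a) '' A) := by
      rw [Set.image_image, Set.image_image]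
      exact Set.image_congr fun b _ => S.rmul2_ι2 a b
    rwa [him] at hcl
  have h0 : ∀ z ∈ (fun b => b * a) '' A, S.τ (x * z) = 0 := by
    rintro _ ⟨b, hb, rfl⟩
    exact hx _ (mul_azero S hA hb ha)
  have hres := inner_zero_of_mem_closure S hA x hy' h0
  rw [S.inner_ι2, star_star] at hres
  rw [mul_assoc]
  exact hres

lemma phi_mul_zero (hdens : L2Density S A) {u v : M}
    (hu : ∀ a ∈ Azero A Φ, S.τ (u * a) = 0) (hu0 : Φ u = 0)
    (hv : ∀ a ∈ Azero A Φ, S.τ (v * a) = 0) (hv0 : Φ v = 0) :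
    Φ (u * v) = 0 := by
  apply zero_of_tau_mul S
  intro m
  have key : S.τ (Φ (u * v) * m) = S.τ (Φ m * (u * v)) := by
    calc S.τ (Φ (u * v) * m) = S.τ (m * Φ (u * v)) := S.τ_tracial _ _
      _ = S.τ (Φ (m * Φ (u * v))) := (hA.tau_phi _).symm
      _ = S.τ (Φ m * Φ (u * v)) := by rw [(hA.phi_bimod (Φ (u * v)) (hA.phi_mem _) m).2]
      _ = S.τ (Φ (Φ m * (u * v))) := by rw [(hA.phi_bimod (Φ m) (hA.phi_mem m) (u * v)).1]
      _ = S.τ (Φ m * (u * v)) := hA.tau_phi _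
  rw [key]
  have hv2 : S.ι2 v ∈ closure (S.ι2 '' Azero A Φ) := mem_closure_Azero S hA hdens hv hv0
  have h0 : ∀ a ∈ Azero A Φ, S.τ ((Φ m * u) * a) = 0 := by
    intro a ha
    calc S.τ (Φ m * u * a) = S.τ (Φ m * (u * a)) := by rw [mul_assoc]
      _ = S.τ ((u * a) * Φ m) := S.τ_tracial _ _
      _ = S.τ (u * (a * Φ m)) := by rw [mul_assoc]
      _ = 0 := hu _ (azero_mul S hA ha (hA.phi_mem m).1)
  have hres := inner_zero_of_mem_closure S hA (Φ m * u) hv2 h0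
  rw [S.inner_ι2, star_star] at hres
  rw [← mul_assoc]
  exact hres

lemma dpart_mul {d e : M} (hd : d ∈ Dpart A) (he : e ∈ Dpart A) : d * e ∈ Dpart A :=
  ⟨hA.mul_mem _ hd.1 _ he.1, by rw [star_mul]; exact hA.mul_mem _ he.2 _ hd.2⟩

lemma sub_mem_amax' {x y : M}
    (hx : ∀ a ∈ Azero A Φ, S.τ (x * a) = 0) (hy : ∀ a ∈ Azero A Φ, S.τ (y * a) = 0) :
    ∀ a ∈ Azero A Φ, S.τ ((x - y) * a) = 0 := by
  intro a ha
  rw [sub_mul, map_sub, hx a ha, hy a ha, sub_zero]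

lemma phi_hom_amax (hdens : L2Density S A) {x y : M}
    (hx : ∀ a ∈ Azero A Φ, S.τ (x * a) = 0)
    (hy : ∀ a ∈ Azero A Φ, S.τ (y * a) = 0) :
    Φ (x * y) = Φ x * Φ y := by
  have hidx : Φ (Φ x) = Φ x := hA.phi_id _ (hA.phi_mem x)
  have hidy : Φ (Φ y) = Φ y := hA.phi_id _ (hA.phi_mem y)
  have hx0 : ∀ a ∈ Azero A Φ, S.τ ((x - Φ x) * a) = 0 :=
    sub_mem_amax' S hA hx (A_subset_Amax S hA (hA.phi_mem x).1)
  have hy0 : ∀ a ∈ Azero A Φ, S.τ ((y - Φ y) * a) = 0 :=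
    sub_mem_amax' S hA hy (A_subset_Amax S hA (hA.phi_mem y).1)
  have hΦx0 : Φ (x - Φ x) = 0 := by rw [map_sub, hidx, sub_self]
  have hΦy0 : Φ (y - Φ y) = 0 := by rw [map_sub, hidy, sub_self]
  have hxy : x * y = Φ x * Φ y + (Φ x * (y - Φ y) + ((x - Φ x) * Φ y
      + (x - Φ x) * (y - Φ y))) := by noncomm_ring
  rw [hxy, map_add, map_add, map_add]
  rw [hA.phi_id _ (dpart_mul S hA (hA.phi_mem x) (hA.phi_mem y))]
  rw [(hA.phi_bimod (Φ x) (hA.phi_mem x) (y - Φ y)).1, hΦy0, mul_zero]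
  rw [(hA.phi_bimod (Φ y) (hA.phi_mem y) (x - Φ x)).2, hΦx0, zero_mul]
  rw [phi_mul_zero S hA hdens hx0 hΦx0 hy0 hΦy0]
  simp

lemma amax_wstar_closed :
    IsClosed[S.wstarTop] {x : M | ∀ a ∈ Azero A Φ, S.τ (x * a) = 0} := by
  have hfc : Continuous[S.wstarTop, Pi.topologicalSpace]
      (fun (x : M) (h : L1) => S.tr1 (S.rmul h x)) := continuous_induced_dom
  have hT : IsClosed {g : L1 → ℂ | ∀ a ∈ Azero A Φ, g (S.ι1 a) = 0} := by
    have hrw : {g : L1 → ℂ | ∀ a ∈ Azero A Φ, g (S.ι1 a) = 0}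
        = ⋂ a ∈ Azero A Φ, {g : L1 → ℂ | g (S.ι1 a) = 0} := by
      ext g; simp
    rw [hrw]
    exact isClosed_biInter fun a ha => isClosed_eq (continuous_apply _) continuous_const
  have hset : {x : M | ∀ a ∈ Azero A Φ, S.τ (x * a) = 0}
      = (fun (x : M) (h : L1) => S.tr1 (S.rmul h x)) ⁻¹'
        {g : L1 → ℂ | ∀ a ∈ Azero A Φ, g (S.ι1 a) = 0} := by
    ext x
    simp only [Set.mem_setOf_eq, Set.mem_preimage]
    constructor
    · intro h a ha; rw [S.rmul_ι1, S.tr1_ι1, S.τ_tracial]; exact h a ha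
    · intro h a ha; have h2 := h a ha; rwa [S.rmul_ι1, S.tr1_ι1, S.τ_tracial] at h2
  rw [hset]
  exact @IsClosed.preimage M (L1 → ℂ) S.wstarTop _ _ hfc _ hT


end NC51
end Aux51


/-- Lemma 5.1: if a tracial subalgebra `A` of `M` (with conditional expectation `Φ`)
satisfies `L²`-density, then `{x ∈ M : τ(xa) = 0 for all a ∈ A₀}` is the unique largest
tracial subalgebra of `M` containing `A` with conditional expectation `Φ`; in
particular, if `A` is maximal and satisfies `L²`-density then `A` is τ-maximal. -/
theorem largest_tracialSubalgebra_of_l2Density {M L1 L2 : Type*} [CStarAlgebra M] [PartialOrder M] [StarOrderedRing M]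
    [NormedAddCommGroup L1] [NormedSpace ℂ L1]
    [NormedAddCommGroup L2] [InnerProductSpace ℂ L2]
    (S : NCSetup M L1 L2)
    (A : Set M) (Φ : M →L[ℂ] M) (Φ1 : L1 →L[ℂ] L1)
    (hA : IsTracialSubalgebra S A Φ Φ1) (hd : L2Density S A) :
    (IsTracialSubalgebra S {x : M | ∀ a ∈ Azero A Φ, S.τ (x * a) = 0} Φ Φ1 ∧
      A ⊆ {x : M | ∀ a ∈ Azero A Φ, S.τ (x * a) = 0} ∧
      (∀ (B : Set M) (Φ1' : L1 →L[ℂ] L1), IsTracialSubalgebra S B Φ Φ1' → A ⊆ B →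
        B ⊆ {x : M | ∀ a ∈ Azero A Φ, S.τ (x * a) = 0})) ∧
    (IsMaximalTracial S A Φ → TauMaximal S A Φ) := by
  
  have hpart1 : IsTracialSubalgebra S {x : M | ∀ a ∈ Azero A Φ, S.τ (x * a) = 0} Φ Φ1 :=
    { one_mem := fun a ha => by rw [one_mul]; exact NC51.tau_azero S hA ha
      add_mem := fun x hx y hy a ha => by rw [add_mul, map_add, hx a ha, hy a ha, add_zero]
      mul_mem := fun x hx y hy => NC51.mul_mem_amax S hA hd hx hy
      smul_mem := fun c x hx a ha => by rw [smul_mul_assoc, map_smul, hx a ha, smul_zero]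
      wstar_closed := NC51.amax_wstar_closed S hA
      phi_mem := fun x => ⟨NC51.A_subset_Amax S hA (hA.phi_mem x).1,
        NC51.A_subset_Amax S hA (hA.phi_mem x).2⟩
      phi_id := fun d hdm => hA.phi_id d (NC51.mem_D_of_amax S hA hd hdm.1 hdm.2)
      phi_hom := fun a ha b hb => NC51.phi_hom_amax S hA hd ha hb
      phi_pos := hA.phi_pos
      phi_faithful := hA.phi_faithful
      tau_phi := hA.tau_phi
      phi_bimod := fun d hdm x => hA.phi_bimod d (NC51.mem_D_of_amax S hA hd hdm.1 hdm.2) x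
      phi_normal := hA.phi_normal
      phi1_ι1 := hA.phi1_ι1
      phi1_contraction := hA.phi1_contraction }
  refine ⟨⟨hpart1, NC51.A_subset_Amax S hA, ?_⟩, ?_⟩
  · intro B Φ1' hB hAB x hx a ha
    have hxa : Φ (x * a) = 0 := by
      rw [hB.phi_hom x hx a (hAB ha.1), ha.2, mul_zero]
    rw [← hB.tau_phi, hxa, map_zero]
  · intro hmax
    exact (hmax _ Φ Φ1 hpart1 (NC51.A_subset_Amax S hA) (fun a _ => rfl)).symm
end
end

section
/- Let A be a tracial subalgebra of M, and let Φ also denote the canonical extension of Φ to L¹(M). Then {x ∈ L¹(M) : τ(xa) = 0 for all a ∈ A} = {x ∈ L¹(M) : τ(xa) = 0 for all a ∈ A₀} ∩ ker Φ. Moreover, for any y ∈ {x ∈ L¹(M) : τ(xa) = 0 for all a ∈ A₀}, one has Φ(by) = Φ(b)Φ(y) for all b ∈ A. -/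
/-!
Common framework: a von Neumann algebra `M` with a faithful normal tracial state `τ`,
together with its noncommutative spaces `L¹(M)` and `L²(M)` (the completions of `M` in the
norms `τ(|x|)` and `τ(|x|²)^{1/2}`), the canonical bimodule actions, the trace functional,
the absolute value, the Fuglede–Kadison determinant `Δ`, and the weak* topology on `M`
(the topology induced by the pairing with its predual `L¹(M)`).
-/

open scoped ComplexOrder Topology

noncomputable section

section Aux62

variable {M L1 L2 : Type*} [CStarAlgebra M] [PartialOrder M] [StarOrderedRing M]
    [NormedAddCommGroup L1] [NormedSpace ℂ L1]
    [NormedAddCommGroup L2] [InnerProductSpace ℂ L2]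
    (S : NCSetup M L1 L2)

lemma NC62.tau_re_nonneg {x : M} (hx : 0 ≤ x) : 0 ≤ (S.τ x).re :=
  (Complex.le_def.mp (S.τ_pos x hx)).1

lemma NC62.tau_re_mono {x y : M} (hxy : x ≤ y) : (S.τ x).re ≤ (S.τ y).re := by
  have h0 : 0 ≤ (S.τ (y - x)).re := NC62.tau_re_nonneg S (sub_nonneg.mpr hxy)
  have h2 : S.τ (y - x) = S.τ y - S.τ x := map_sub _ _ _
  rw [h2, Complex.sub_re] at h0
  linarith

lemma NC62.norm_ι2_sq (b : M) : ‖S.ι2 b‖ = Real.sqrt (S.τ (star b * b)).re := by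
  have h : (S.τ (star b * b)).re = ‖S.ι2 b‖ ^ 2 := by
    rw [← S.inner_ι2 b b]
    exact inner_self_eq_norm_sq (𝕜 := ℂ) (S.ι2 b)
  rw [h, Real.sqrt_sq (norm_nonneg _)]

/-- Cauchy–Schwarz for `τ`, via the `L²` inner product. -/
lemma NC62.cauchy_schwarz (b c : M) :
    ‖S.τ (star b * c)‖ ≤ Real.sqrt (S.τ (star b * b)).re * Real.sqrt (S.τ (star c * c)).re := by
  rw [← NC62.norm_ι2_sq, ← NC62.norm_ι2_sq, ← S.inner_ι2 b c]
  exact norm_inner_le_norm _ _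

/-- Noncommutative Hölder-type bound `|τ(ya)| ≤ ‖a‖ τ(|y|)`. -/
lemma NC62.holder (y a : M) : ‖S.τ (y * a)‖ ≤ ‖a‖ * (S.τ (ncAbs y)).re := by
  set p : M := star y * y with hp_def
  have hp : 0 ≤ p := star_mul_self_nonneg y
  have hpsa : IsSelfAdjoint p := IsSelfAdjoint.of_nonneg hp
  have hs : ∀ t ∈ spectrum ℝ p, (0:ℝ) ≤ t := fun t ht => spectrum_nonneg_of_nonneg hp ht
  have habs_nonneg : (0:M) ≤ ncAbs y := cfc_nonneg (fun t _ => Real.sqrt_nonneg t)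
  have hB : 0 ≤ (S.τ (ncAbs y)).re := NC62.tau_re_nonneg S habs_nonneg
  -- main ε-estimate
  have key : ∀ ε : ℝ, 0 < ε →
      ‖S.τ (y * a)‖ ≤ ‖a‖ * ((S.τ (ncAbs y)).re + Real.sqrt ε) := by
    intro ε hε
    have hεp : ∀ t ∈ spectrum ℝ p, (0:ℝ) < t + ε := fun t ht => by
      have := hs t ht; linarith
    have hfsq : ContinuousOn (fun t : ℝ => Real.sqrt (t + ε)) (spectrum ℝ p) := by fun_prop
    have hfr : ContinuousOn (fun t : ℝ => Real.sqrt (Real.sqrt (t + ε))) (spectrum ℝ p) := by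
      fun_prop
    have hfw : ContinuousOn (fun t : ℝ => (Real.sqrt (t + ε))⁻¹) (spectrum ℝ p) := by
      apply ContinuousOn.inv₀ (by fun_prop)
      intro t ht
      have := hεp t ht
      positivity
    set sq : M := cfc (fun t : ℝ => Real.sqrt (t + ε)) p with hsq_def
    set r : M := cfc (fun t : ℝ => Real.sqrt (Real.sqrt (t + ε))) p with hr_def
    set w : M := cfc (fun t : ℝ => (Real.sqrt (t + ε))⁻¹) p with hw_def
    have hr_sa : IsSelfAdjoint r := cfc_predicate _ p
    have hw_sa : IsSelfAdjoint w := cfc_predicate _ p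
    have hsq_nonneg : (0:M) ≤ sq := cfc_nonneg (fun t _ => Real.sqrt_nonneg _)
    have hrr : r * r = sq := by
      rw [hr_def, hsq_def, ← cfc_mul _ _ p hfr hfr]
      exact cfc_congr (fun t _ => Real.mul_self_sqrt (Real.sqrt_nonneg _))
    have hws : w * sq = 1 := by
      rw [hw_def, hsq_def, ← cfc_mul _ _ p hfw hfsq, ← cfc_one ℝ p]
      apply cfc_congr
      intro t ht
      have h1 : Real.sqrt (t + ε) ≠ 0 := by
        have := hεp t ht; positivity
      simp [inv_mul_cancel₀ h1]
    set v : M := y * w with hv_def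
    have hvsq : v * sq = y := by rw [hv_def, mul_assoc, hws, mul_one]
    -- ‖v‖ ≤ 1
    have hwpw : cfc (fun t : ℝ => (Real.sqrt (t + ε))⁻¹ * t * (Real.sqrt (t + ε))⁻¹) p
        = w * p * w := by
      rw [cfc_mul (fun t : ℝ => (Real.sqrt (t + ε))⁻¹ * t) (fun t : ℝ => (Real.sqrt (t + ε))⁻¹) p (hfw.mul (by fun_prop)) hfw, cfc_mul _ _ p hfw (by fun_prop),
        cfc_id' ℝ p hpsa, ← hw_def]
    have hvstar : star v * v = cfc (fun t : ℝ => (Real.sqrt (t + ε))⁻¹ * t * (Real.sqrt (t + ε))⁻¹) p := by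
      rw [hwpw, hv_def, star_mul, hw_sa.star_eq, hp_def]
      noncomm_ring
    have hv_norm : ‖v‖ ≤ 1 := by
      have h1 : ‖star v * v‖ ≤ 1 := by
        rw [hvstar]
        apply norm_cfc_le one_pos.le
        intro t ht
        have ht0 := hs t ht
        have hs0 : 0 < Real.sqrt (t + ε) := Real.sqrt_pos.mpr (hεp t ht)
        have hss : Real.sqrt (t + ε) * Real.sqrt (t + ε) = t + ε :=
          Real.mul_self_sqrt (hεp t ht).le
        rw [Real.norm_eq_abs, abs_of_nonneg (by positivity)]
        rw [show (Real.sqrt (t+ε))⁻¹ * t * (Real.sqrt (t+ε))⁻¹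
            = t / (Real.sqrt (t+ε) * Real.sqrt (t+ε)) by field_simp]
        rw [hss, div_le_one (hεp t ht)]
        linarith
      have h2 : ‖star v * v‖ = ‖v‖ * ‖v‖ := CStarRing.norm_star_mul_self
      nlinarith [norm_nonneg v]
    -- trace computation
    set z : M := r * (a * v) with hz_def
    have htr : S.τ (y * a) = S.τ (star r * z) := by
      have h1 : y * a = v * (sq * a) := by rw [← hvsq, mul_assoc]
      rw [h1, S.τ_tracial v (sq * a), hr_sa.star_eq, hz_def, ← hrr]
      congr 1
      simp [mul_assoc]
    set T : ℝ := (S.τ sq).re with hT_def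
    have hT0 : 0 ≤ T := NC62.tau_re_nonneg S hsq_nonneg
    have hCS : ‖S.τ (star r * z)‖ ≤
        Real.sqrt (S.τ (star r * r)).re * Real.sqrt (S.τ (star z * z)).re :=
      NC62.cauchy_schwarz S r z
    have hrsq : (S.τ (star r * r)).re = T := by rw [hr_sa.star_eq, hrr]
    -- bound τ(z* z)
    have hzz : (S.τ (star z * z)).re ≤ ‖a‖ ^ 2 * T := by
      set m : M := (a * v) * star (a * v) with hm_def
      have hm0 : 0 ≤ m := mul_star_self_nonneg _
      have hzz1 : S.τ (star z * z) = S.τ (r * m * r) := by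
        rw [S.τ_tracial (star z) z]
        congr 1
        simp only [hz_def, hm_def, star_mul, hr_sa.star_eq, mul_assoc]
      have hm_le : m ≤ algebraMap ℝ M ‖m‖ :=
        IsSelfAdjoint.le_algebraMap_norm_self (IsSelfAdjoint.of_nonneg hm0)
      have hconj : r * m * r ≤ r * algebraMap ℝ M ‖m‖ * r := by
        have := star_left_conjugate_le_conjugate hm_le r
        rwa [hr_sa.star_eq] at this
      have halg : r * algebraMap ℝ M ‖m‖ * r = (‖m‖ : ℂ) • sq := by
        rw [show r * algebraMap ℝ M ‖m‖ * r = algebraMap ℝ M ‖m‖ * (r * r) by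
          rw [← Algebra.commutes ‖m‖ r]; noncomm_ring]
        rw [hrr, IsScalarTower.algebraMap_apply ℝ ℂ M, Algebra.algebraMap_eq_smul_one,
          smul_mul_assoc, one_mul]
        norm_num
      have h1 : (S.τ (r * m * r)).re ≤ (S.τ ((‖m‖ : ℂ) • sq)).re := by
        rw [← halg]; exact NC62.tau_re_mono S hconj
      have h2 : (S.τ ((‖m‖ : ℂ) • sq)).re = ‖m‖ * T := by
        rw [map_smul, smul_eq_mul, Complex.re_ofReal_mul]
      have hm_norm : ‖m‖ ≤ ‖a‖ ^ 2 := by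
        have h3 : ‖m‖ = ‖a * v‖ * ‖a * v‖ := by rw [hm_def]; exact CStarRing.norm_self_mul_star
        have h4 : ‖a * v‖ ≤ ‖a‖ := by
          calc ‖a * v‖ ≤ ‖a‖ * ‖v‖ := norm_mul_le a v
          _ ≤ ‖a‖ * 1 := by
            exact mul_le_mul_of_nonneg_left hv_norm (norm_nonneg a)
          _ = ‖a‖ := mul_one _
        calc ‖m‖ = ‖a * v‖ * ‖a * v‖ := h3
        _ ≤ ‖a‖ * ‖a‖ := mul_le_mul h4 h4 (norm_nonneg _) (norm_nonneg _)
        _ = ‖a‖ ^ 2 := (pow_two ‖a‖).symm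
      calc (S.τ (star z * z)).re = (S.τ (r * m * r)).re := by rw [hzz1]
      _ ≤ ‖m‖ * T := by rw [← h2]; exact h1
      _ ≤ ‖a‖ ^ 2 * T := mul_le_mul_of_nonneg_right hm_norm hT0
    -- combine
    have hzz_sqrt : Real.sqrt (S.τ (star z * z)).re ≤ ‖a‖ * Real.sqrt T := by
      calc Real.sqrt (S.τ (star z * z)).re ≤ Real.sqrt (‖a‖ ^ 2 * T) := Real.sqrt_le_sqrt hzz
      _ = ‖a‖ * Real.sqrt T := by
        rw [Real.sqrt_mul (sq_nonneg _), Real.sqrt_sq (norm_nonneg _)]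
    have hfin : ‖S.τ (y * a)‖ ≤ ‖a‖ * T := by
      calc ‖S.τ (y * a)‖ = ‖S.τ (star r * z)‖ := by rw [htr]
      _ ≤ Real.sqrt (S.τ (star r * r)).re * Real.sqrt (S.τ (star z * z)).re := hCS
      _ = Real.sqrt T * Real.sqrt (S.τ (star z * z)).re := by rw [hrsq]
      _ ≤ Real.sqrt T * (‖a‖ * Real.sqrt T) :=
        mul_le_mul_of_nonneg_left hzz_sqrt (Real.sqrt_nonneg T)
      _ = ‖a‖ * (Real.sqrt T * Real.sqrt T) := by ring
      _ = ‖a‖ * T := by rw [Real.mul_self_sqrt hT0]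
    -- T ≤ τ(|y|) + √ε
    have hT_le : T ≤ (S.τ (ncAbs y)).re + Real.sqrt ε := by
      have hle : sq ≤ ncAbs y + algebraMap ℝ M (Real.sqrt ε) := by
        have hmono : sq ≤ cfc (fun t : ℝ => Real.sqrt t + Real.sqrt ε) p := by
          rw [hsq_def]
          refine cfc_mono (fun t ht => ?_) hfsq (by fun_prop)
          have ht0 := hs t ht
          rw [show t + ε = Real.sqrt t * Real.sqrt t + Real.sqrt ε * Real.sqrt ε by
            rw [Real.mul_self_sqrt ht0, Real.mul_self_sqrt hε.le]]
          nlinarith [Real.sqrt_nonneg t, Real.sqrt_nonneg ε,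
            Real.sqrt_nonneg (Real.sqrt t * Real.sqrt t + Real.sqrt ε * Real.sqrt ε),
            Real.sq_sqrt (show (0:ℝ) ≤ Real.sqrt t * Real.sqrt t + Real.sqrt ε * Real.sqrt ε
              by positivity)]
        have hsplit : cfc (fun t : ℝ => Real.sqrt t + Real.sqrt ε) p
            = ncAbs y + algebraMap ℝ M (Real.sqrt ε) := by
          rw [cfc_add p _ _ (by fun_prop) (by fun_prop), cfc_const (Real.sqrt ε) p hpsa]
          simp only [ncAbs, ← hp_def]
        rw [← hsplit]; exact hmono
      have h5 := NC62.tau_re_mono S hle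
      have h6 : (S.τ (ncAbs y + algebraMap ℝ M (Real.sqrt ε))).re
          = (S.τ (ncAbs y)).re + Real.sqrt ε := by
        rw [map_add, Complex.add_re]
        congr 1
        rw [IsScalarTower.algebraMap_apply ℝ ℂ M, Algebra.algebraMap_eq_smul_one,
          map_smul, smul_eq_mul]
        simp [S.τ_one]
      rw [h6] at h5
      exact h5
    calc ‖S.τ (y * a)‖ ≤ ‖a‖ * T := hfin
    _ ≤ ‖a‖ * ((S.τ (ncAbs y)).re + Real.sqrt ε) :=
      mul_le_mul_of_nonneg_left hT_le (norm_nonneg a)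
  -- conclude by letting ε → 0
  apply le_of_forall_pos_le_add
  intro δ hδ
  rcases eq_or_lt_of_le (norm_nonneg a) with h0 | h0
  · have h1 := key 1 one_pos
    rw [← h0, zero_mul] at h1
    rw [← h0, zero_mul, zero_add]
    linarith
  · have hne : ‖a‖ ≠ 0 := ne_of_gt h0
    have := key ((δ / ‖a‖) ^ 2) (by positivity)
    rw [Real.sqrt_sq (by positivity)] at this
    calc ‖S.τ (y * a)‖ ≤ ‖a‖ * ((S.τ (ncAbs y)).re + δ / ‖a‖) := this
    _ = ‖a‖ * (S.τ (ncAbs y)).re + δ := by field_simp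

/-- Near-attainment of `τ(|y|)` by the pairing with a contraction. -/
lemma NC62.attain (y : M) {δ : ℝ} (hδ : 0 < δ) :
    ∃ a : M, ‖a‖ ≤ 1 ∧ (S.τ (ncAbs y)).re ≤ ‖S.τ (y * a)‖ + δ := by
  set ε : ℝ := δ ^ 2 with hε_def
  have hε : 0 < ε := by positivity
  set p : M := star y * y with hp_def
  have hp : 0 ≤ p := star_mul_self_nonneg y
  have hpsa : IsSelfAdjoint p := IsSelfAdjoint.of_nonneg hp
  have hs : ∀ t ∈ spectrum ℝ p, (0:ℝ) ≤ t := fun t ht => spectrum_nonneg_of_nonneg hp ht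
  have hεp : ∀ t ∈ spectrum ℝ p, (0:ℝ) < t + ε := fun t ht => by
    have := hs t ht; linarith
  have hfw : ContinuousOn (fun t : ℝ => (Real.sqrt (t + ε))⁻¹) (spectrum ℝ p) := by
    apply ContinuousOn.inv₀ (by fun_prop)
    intro t ht
    have := hεp t ht
    positivity
  set w : M := cfc (fun t : ℝ => (Real.sqrt (t + ε))⁻¹) p with hw_def
  have hw_sa : IsSelfAdjoint w := cfc_predicate _ p
  refine ⟨w * star y, ?_, ?_⟩
  · -- norm bound
    have hwpw : cfc (fun t : ℝ => (Real.sqrt (t + ε))⁻¹ * t * (Real.sqrt (t + ε))⁻¹) p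
        = w * p * w := by
      rw [cfc_mul (fun t : ℝ => (Real.sqrt (t + ε))⁻¹ * t) (fun t : ℝ => (Real.sqrt (t + ε))⁻¹) p (hfw.mul (by fun_prop)) hfw, cfc_mul _ _ p hfw (by fun_prop),
        cfc_id' ℝ p hpsa, ← hw_def]
    have h1 : (w * star y) * star (w * star y) = cfc
        (fun t : ℝ => (Real.sqrt (t + ε))⁻¹ * t * (Real.sqrt (t + ε))⁻¹) p := by
      rw [hwpw, star_mul, star_star, hw_sa.star_eq, hp_def]
      noncomm_ring
    have h2 : ‖(w * star y) * star (w * star y)‖ ≤ 1 := by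
      rw [h1]
      apply norm_cfc_le one_pos.le
      intro t ht
      have ht0 := hs t ht
      have hs0 : 0 < Real.sqrt (t + ε) := Real.sqrt_pos.mpr (hεp t ht)
      have hss : Real.sqrt (t + ε) * Real.sqrt (t + ε) = t + ε :=
        Real.mul_self_sqrt (hεp t ht).le
      rw [Real.norm_eq_abs, abs_of_nonneg (by positivity)]
      rw [show (Real.sqrt (t+ε))⁻¹ * t * (Real.sqrt (t+ε))⁻¹
          = t / (Real.sqrt (t+ε) * Real.sqrt (t+ε)) by field_simp]
      rw [hss, div_le_one (hεp t ht)]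
      linarith
    have h3 : ‖(w * star y) * star (w * star y)‖ = ‖w * star y‖ * ‖w * star y‖ :=
      CStarRing.norm_self_mul_star
    nlinarith [norm_nonneg (w * star y)]
  · -- value bound
    have hwp : cfc (fun t : ℝ => (Real.sqrt (t + ε))⁻¹ * t) p = w * p := by
      rw [cfc_mul _ _ p hfw (by fun_prop), cfc_id' ℝ p hpsa, ← hw_def]
    have htr : S.τ (y * (w * star y)) = S.τ (cfc (fun t : ℝ => (Real.sqrt (t + ε))⁻¹ * t) p) := by
      rw [S.τ_tracial y (w * star y), hwp, hp_def]
      congr 1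
      noncomm_ring
    have hmono : ncAbs y ≤ cfc (fun t : ℝ => (Real.sqrt (t + ε))⁻¹ * t) p
        + algebraMap ℝ M (Real.sqrt ε) := by
      have hstep : ncAbs y ≤ cfc (fun t : ℝ => (Real.sqrt (t + ε))⁻¹ * t + Real.sqrt ε) p := by
        apply cfc_mono ?_ (by fun_prop) ((hfw.mul (by fun_prop)).add (by fun_prop))
        intro t ht
        have ht0 := hs t ht
        have hs0 : 0 < Real.sqrt (t+ε) := Real.sqrt_pos.mpr (hεp t ht)
        have hss : Real.sqrt (t+ε) * Real.sqrt (t+ε) = t + ε := Real.mul_self_sqrt (hεp t ht).le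
        have h1 : Real.sqrt t ≤ Real.sqrt (t+ε) := Real.sqrt_le_sqrt (by linarith)
        have h2 : Real.sqrt ε ≤ Real.sqrt (t+ε) := Real.sqrt_le_sqrt (by linarith)
        have h3 : Real.sqrt ε * Real.sqrt ε = ε := Real.mul_self_sqrt hε.le
        show Real.sqrt t ≤ (Real.sqrt (t + ε))⁻¹ * t + Real.sqrt ε
        rw [inv_mul_eq_div, div_add' _ _ _ hs0.ne', le_div_iff₀ hs0]
        nlinarith [Real.sqrt_nonneg t, Real.sqrt_nonneg ε]
      have hsplit : cfc (fun t : ℝ => (Real.sqrt (t + ε))⁻¹ * t + Real.sqrt ε) p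
          = cfc (fun t : ℝ => (Real.sqrt (t + ε))⁻¹ * t) p + algebraMap ℝ M (Real.sqrt ε) := by
        rw [cfc_add p (fun t : ℝ => (Real.sqrt (t + ε))⁻¹ * t) (fun _ : ℝ => Real.sqrt ε) (hfw.mul (by fun_prop)) (by fun_prop), cfc_const (Real.sqrt ε) p hpsa]
      rw [← hsplit]
      exact hstep
    have h5 := NC62.tau_re_mono S hmono
    have h6 : (S.τ (cfc (fun t : ℝ => (Real.sqrt (t + ε))⁻¹ * t) p
        + algebraMap ℝ M (Real.sqrt ε))).re
        = (S.τ (cfc (fun t : ℝ => (Real.sqrt (t + ε))⁻¹ * t) p)).re + Real.sqrt ε := by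
      rw [map_add, Complex.add_re]
      congr 1
      rw [IsScalarTower.algebraMap_apply ℝ ℂ M, Algebra.algebraMap_eq_smul_one,
        map_smul, smul_eq_mul]
      simp [S.τ_one]
    rw [h6] at h5
    have h7 : (S.τ (cfc (fun t : ℝ => (Real.sqrt (t + ε))⁻¹ * t) p)).re
        ≤ ‖S.τ (y * (w * star y))‖ := by
      rw [htr]
      calc (S.τ (cfc (fun t : ℝ => (Real.sqrt (t + ε))⁻¹ * t) p)).re
          ≤ ‖S.τ (cfc (fun t : ℝ => (Real.sqrt (t + ε))⁻¹ * t) p)‖ :=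
            Complex.re_le_norm _
      _ = ‖S.τ (cfc (fun t : ℝ => (Real.sqrt (t + ε))⁻¹ * t) p)‖ := rfl
    have h8 : Real.sqrt ε = δ := by rw [hε_def, Real.sqrt_sq hδ.le]
    rw [h8] at h5
    linarith

/-- `rmul` is additive in its first variable. -/
lemma NC62.rmul_add (g g' : L1) (a : M) :
    S.rmul (g + g') a = S.rmul g a + S.rmul g' a := by
  refine DenseRange.induction_on₂ S.ι1_dense ?_ ?_ g g'
  · apply isClosed_eq
    · exact (S.rmul_cont a).comp continuous_add
    · exact ((S.rmul_cont a).comp continuous_fst).add ((S.rmul_cont a).comp continuous_snd)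
  · intro x x'
    rw [← map_add, S.rmul_ι1, S.rmul_ι1, S.rmul_ι1, add_mul, map_add]

lemma NC62.rmul_zero (a : M) : S.rmul 0 a = 0 := by
  have h := NC62.rmul_add S 0 0 a
  rw [add_zero] at h
  nth_rewrite 1 [← add_zero (S.rmul 0 a)] at h
  exact (add_left_cancel h).symm

lemma NC62.rmul_sub (g g' : L1) (a : M) :
    S.rmul (g - g') a = S.rmul g a - S.rmul g' a := by
  have h := NC62.rmul_add S (g - g') g' a
  rw [sub_add_cancel] at h
  rw [h, add_sub_cancel_right]

/-- `rmul` is additive in its second variable. -/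
lemma NC62.rmul_add_right (g : L1) (a b : M) :
    S.rmul g (a + b) = S.rmul g a + S.rmul g b := by
  refine S.ι1_dense.induction_on g ?_ ?_
  · exact isClosed_eq (S.rmul_cont (a + b)) ((S.rmul_cont a).add (S.rmul_cont b))
  · intro m
    rw [S.rmul_ι1, S.rmul_ι1, S.rmul_ι1, mul_add, map_add]

lemma NC62.rmul_sub_right (g : L1) (a b : M) :
    S.rmul g (a - b) = S.rmul g a - S.rmul g b := by
  refine S.ι1_dense.induction_on g ?_ ?_
  · exact isClosed_eq (S.rmul_cont (a - b)) ((S.rmul_cont a).sub (S.rmul_cont b))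
  · intro m
    rw [S.rmul_ι1, S.rmul_ι1, S.rmul_ι1, mul_sub, map_sub]

/-- `L¹`–`L^∞` duality bound for the pairing. -/
lemma NC62.norm_pair (g : L1) (a : M) : ‖S.tr1 (S.rmul g a)‖ ≤ ‖a‖ * ‖g‖ := by
  refine S.ι1_dense.induction_on g ?_ ?_
  · apply isClosed_le
    · exact continuous_norm.comp (S.tr1.continuous.comp (S.rmul_cont a))
    · exact continuous_const.mul continuous_norm
  · intro x
    rw [S.rmul_ι1, S.tr1_ι1, S.ι1_norm]
    exact NC62.holder S x a

/-- Nondegeneracy of the pairing between `L¹(M)` and `M`. -/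
lemma NC62.nondeg (h : L1) (hh : ∀ a : M, S.tr1 (S.rmul h a) = 0) : h = 0 := by
  rw [← norm_le_zero_iff]
  apply le_of_forall_pos_le_add
  intro ε hε
  have hδ : 0 < ε / 3 := by linarith
  obtain ⟨b, ⟨y, rfl⟩, hy⟩ := Metric.mem_closure_iff.mp (S.ι1_dense h) (ε / 3) hδ
  obtain ⟨a, ha1, ha2⟩ := NC62.attain S y hδ
  have e1 : S.τ (y * a) = S.tr1 (S.rmul (S.ι1 y - h) a) := by
    rw [NC62.rmul_sub, map_sub, hh a, sub_zero, S.rmul_ι1, S.tr1_ι1]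
  have e3 : ‖S.ι1 y - h‖ < ε / 3 := by
    rw [← dist_eq_norm, dist_comm]
    exact hy
  have e2 : ‖S.τ (y * a)‖ ≤ ‖S.ι1 y - h‖ := by
    rw [e1]
    calc ‖S.tr1 (S.rmul (S.ι1 y - h) a)‖ ≤ ‖a‖ * ‖S.ι1 y - h‖ := NC62.norm_pair S _ a
    _ ≤ 1 * ‖S.ι1 y - h‖ := mul_le_mul_of_nonneg_right ha1 (norm_nonneg _)
    _ = ‖S.ι1 y - h‖ := one_mul _
  have e4 : ‖h‖ ≤ ‖S.ι1 y‖ + ‖S.ι1 y - h‖ := by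
    calc ‖h‖ = ‖S.ι1 y + (h - S.ι1 y)‖ := by rw [add_sub_cancel]
    _ ≤ ‖S.ι1 y‖ + ‖h - S.ι1 y‖ := norm_add_le _ _
    _ = ‖S.ι1 y‖ + ‖S.ι1 y - h‖ := by rw [norm_sub_rev]
  have e5 : ‖S.ι1 y‖ = (S.τ (ncAbs y)).re := S.ι1_norm y
  linarith

/-- Associativity of the right action. -/
lemma NC62.rmul_rmul (g : L1) (x b : M) :
    S.rmul (S.rmul g x) b = S.rmul g (x * b) := by
  refine S.ι1_dense.induction_on g ?_ ?_
  · exact isClosed_eq ((S.rmul_cont b).comp (S.rmul_cont x)) (S.rmul_cont (x * b))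
  · intro m
    rw [S.rmul_ι1, S.rmul_ι1, S.rmul_ι1, mul_assoc]

/-- Trace identity for the left action. -/
lemma NC62.tr_lmul (g : L1) (b x : M) :
    S.tr1 (S.rmul (S.lmul b g) x) = S.tr1 (S.rmul g (x * b)) := by
  refine S.ι1_dense.induction_on g ?_ ?_
  · exact isClosed_eq (S.tr1.continuous.comp ((S.rmul_cont x).comp (S.lmul_cont b)))
      (S.tr1.continuous.comp (S.rmul_cont (x * b)))
  · intro m
    rw [S.lmul_ι1, S.rmul_ι1, S.rmul_ι1, S.tr1_ι1, S.tr1_ι1]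
    calc S.τ ((b * m) * x) = S.τ (x * (b * m)) := S.τ_tracial _ _
    _ = S.τ ((x * b) * m) := by rw [mul_assoc]
    _ = S.τ (m * (x * b)) := S.τ_tracial _ _

/-- The key self-adjointness identity `τ(g Φ(x)) = τ(Φ₁(g) x)`. -/
lemma NC62.tr_phi {A : Set M} {Φ : M →L[ℂ] M} {Φ1 : L1 →L[ℂ] L1}
    (hA : IsTracialSubalgebra S A Φ Φ1) (g : L1) (x : M) :
    S.tr1 (S.rmul g (Φ x)) = S.tr1 (S.rmul (Φ1 g) x) := by
  refine S.ι1_dense.induction_on g ?_ ?_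
  · exact isClosed_eq (S.tr1.continuous.comp (S.rmul_cont (Φ x)))
      (S.tr1.continuous.comp ((S.rmul_cont x).comp Φ1.continuous))
  · intro m
    rw [S.rmul_ι1, hA.phi1_ι1, S.rmul_ι1, S.tr1_ι1, S.tr1_ι1]
    have h1 : S.τ (m * Φ x) = S.τ (Φ m * Φ x) := by
      rw [← hA.tau_phi (m * Φ x), (hA.phi_bimod (Φ x) (hA.phi_mem x) m).2]
    have h2 : S.τ (Φ m * x) = S.τ (Φ m * Φ x) := by
      rw [← hA.tau_phi (Φ m * x), (hA.phi_bimod (Φ m) (hA.phi_mem m) x).1]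
    rw [h1, h2]

end Aux62

/-- Lemma 6.2: for a tracial subalgebra `A` of `M`, the annihilator in `L¹(M)` of
`A` is the intersection of the annihilator of `A₀` with the kernel of (the canonical
extension to `L¹(M)` of) `Φ`; and for any `y` annihilating `A₀` one has
`Φ(by) = Φ(b)Φ(y)` for all `b ∈ A`. -/
theorem annihilator_eq_and_phi_mul {M L1 L2 : Type*} [CStarAlgebra M] [PartialOrder M] [StarOrderedRing M]
    [NormedAddCommGroup L1] [NormedSpace ℂ L1]
    [NormedAddCommGroup L2] [InnerProductSpace ℂ L2]
    (S : NCSetup M L1 L2)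
    (A : Set M) (Φ : M →L[ℂ] M) (Φ1 : L1 →L[ℂ] L1)
    (hA : IsTracialSubalgebra S A Φ Φ1) :
    {x : L1 | ∀ a ∈ A, S.tr1 (S.rmul x a) = 0} =
      {x : L1 | ∀ a ∈ Azero A Φ, S.tr1 (S.rmul x a) = 0} ∩ {x : L1 | Φ1 x = 0} ∧
    (∀ y ∈ {x : L1 | ∀ a ∈ Azero A Φ, S.tr1 (S.rmul x a) = 0},
      ∀ b ∈ A, Φ1 (S.lmul b y) = S.lmul (Φ b) (Φ1 y)) := by
  have sub_mem : ∀ x ∈ A, ∀ y ∈ A, x - y ∈ A := by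
    intro x hx y hy
    have h := hA.add_mem x hx ((-1 : ℂ) • y) (hA.smul_mem (-1) y hy)
    rwa [neg_one_smul, ← sub_eq_add_neg] at h
  have hAzero : ∀ a ∈ A, a - Φ a ∈ Azero A Φ := by
    intro a ha
    refine ⟨sub_mem a ha (Φ a) (hA.phi_mem a).1, ?_⟩
    rw [map_sub, hA.phi_id (Φ a) (hA.phi_mem a), sub_self]
  constructor
  · ext x
    simp only [Set.mem_setOf_eq, Set.mem_inter_iff]
    constructor
    · intro hx
      refine ⟨fun a ha => hx a ha.1, ?_⟩
      apply NC62.nondeg S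
      intro a
      rw [← NC62.tr_phi S hA x a]
      exact hx (Φ a) (hA.phi_mem a).1
    · rintro ⟨h0, hker⟩ a ha
      have hsplit : S.rmul x a = S.rmul x (a - Φ a) + S.rmul x (Φ a) := by
        rw [← NC62.rmul_add_right S x (a - Φ a) (Φ a), sub_add_cancel]
      rw [hsplit, map_add, h0 _ (hAzero a ha), zero_add, NC62.tr_phi S hA x a, hker,
        NC62.rmul_zero S a, map_zero]
  · intro y hy b hb
    have key : ∀ x : M, S.tr1 (S.rmul (Φ1 (S.lmul b y)) x)
        = S.tr1 (S.rmul (S.lmul (Φ b) (Φ1 y)) x) := by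
      intro x
      have hL : S.tr1 (S.rmul (Φ1 (S.lmul b y)) x) = S.tr1 (S.rmul y (Φ x * b)) := by
        rw [← NC62.tr_phi S hA (S.lmul b y) x, NC62.tr_lmul S y b (Φ x)]
      have hR : S.tr1 (S.rmul (S.lmul (Φ b) (Φ1 y)) x) = S.tr1 (S.rmul y (Φ x * Φ b)) := by
        rw [NC62.tr_lmul S (Φ1 y) (Φ b) x, ← NC62.tr_phi S hA y (x * Φ b),
          (hA.phi_bimod (Φ b) (hA.phi_mem b) x).2]
      rw [hL, hR]
      have hbsub : b - Φ b ∈ A := sub_mem b hb (Φ b) (hA.phi_mem b).1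
      have hmem : Φ x * (b - Φ b) ∈ Azero A Φ := by
        refine ⟨hA.mul_mem _ (hA.phi_mem x).1 _ hbsub, ?_⟩
        rw [hA.phi_hom _ (hA.phi_mem x).1 _ hbsub, map_sub,
          hA.phi_id (Φ b) (hA.phi_mem b), sub_self, mul_zero]
      have hzero : S.tr1 (S.rmul y (Φ x * (b - Φ b))) = 0 := hy _ hmem
      have hsub : S.tr1 (S.rmul y (Φ x * b)) - S.tr1 (S.rmul y (Φ x * Φ b))
          = S.tr1 (S.rmul y (Φ x * (b - Φ b))) := by
        rw [mul_sub, NC62.rmul_sub_right, map_sub]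
      exact sub_eq_zero.mp (hsub.trans hzero)
    have hdiff : Φ1 (S.lmul b y) - S.lmul (Φ b) (Φ1 y) = 0 := by
      apply NC62.nondeg S
      intro x
      rw [NC62.rmul_sub S _ _ x, map_sub, key x, sub_self]
    exact sub_eq_zero.mp hdiff
end
end
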